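/- arXiv:1206.2066 — 4 statements merged into one kernel-verified Lean document; each statement's English description precedes it below -/
import Mathlib

section
/- If Ggr and Hgr are groups acting freely and properly on the left and right, respectively, of a locally compact Hausdorff space X, with commuting actions, and G := Ggr⋉(X/Hgr), H := (Ggr\X)⋊Hgr are the associated transformation groupoids acting naturally on X, then the map ((s, x·Hgr), x, (Ggr·x, t)) ↦ (s, t, x) is a groupoid isomorphism from (Ggr⋉(X/Hgr))⋉X⋊((Ggr\X)⋊Hgr) onto the transformation groupoid (Ggr×Hgr)⋉X. -/
open MeasureTheory Filter Topology

/-- Algebraic data of a groupoid: arrows, objects (units), range, source,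
unit inclusion, (total extensions of) composition and inversion. -/
structure GroupoidData (Arr : Type) (Obj : Type) where
  r : Arr → Obj
  s : Arr → Obj
  unit : Obj → Arr
  comp : Arr → Arr → Arr
  inv : Arr → Arr

/-- The axioms making `GroupoidData` an honest groupoid (composition is only
required to behave on composable pairs). -/
structure GroupoidData.IsGroupoid {Arr Obj : Type} (D : GroupoidData Arr Obj) : Prop where
  r_unit : ∀ u, D.r (D.unit u) = u
  s_unit : ∀ u, D.s (D.unit u) = u
  r_comp : ∀ a b, D.s a = D.r b → D.r (D.comp a b) = D.r a
  s_comp : ∀ a b, D.s a = D.r b → D.s (D.comp a b) = D.s b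
  comp_assoc : ∀ a b c, D.s a = D.r b → D.s b = D.r c →
    D.comp (D.comp a b) c = D.comp a (D.comp b c)
  unit_comp : ∀ a, D.comp (D.unit (D.r a)) a = a
  comp_unit : ∀ a, D.comp a (D.unit (D.s a)) = a
  r_inv : ∀ a, D.r (D.inv a) = D.s a
  s_inv : ∀ a, D.s (D.inv a) = D.r a
  inv_comp : ∀ a, D.comp (D.inv a) a = D.unit (D.s a)
  comp_inv : ∀ a, D.comp a (D.inv a) = D.unit (D.r a)

/-- A left action of the groupoid `G` on a set `X` with moment map `rX`;
`lact γ x` is only meaningful when `G.s γ = rX x`. -/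
structure IsLeftActionOf {ArrG ObjG X : Type} (G : GroupoidData ArrG ObjG)
    (rX : X → ObjG) (lact : ArrG → X → X) : Prop where
  moment : ∀ γ x, G.s γ = rX x → rX (lact γ x) = G.r γ
  unit_act : ∀ x, lact (G.unit (rX x)) x = x
  comp_act : ∀ γ ξ x, G.s γ = G.r ξ → G.s ξ = rX x →
    lact (G.comp γ ξ) x = lact γ (lact ξ x)

/-- A right action of the groupoid `H` on a set `X` with moment map `sX`;
`ract x η` is only meaningful when `sX x = H.r η`. -/
structure IsRightActionOf {ArrH ObjH X : Type} (H : GroupoidData ArrH ObjH)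
    (sX : X → ObjH) (ract : X → ArrH → X) : Prop where
  moment : ∀ x η, sX x = H.r η → sX (ract x η) = H.s η
  unit_act : ∀ x, ract x (H.unit (sX x)) = x
  comp_act : ∀ x η ζ, sX x = H.r η → H.s η = H.r ζ →
    ract x (H.comp η ζ) = ract (ract x η) ζ

/-- The algebraic part of `X` being a `(G,H)`-equivalence: commuting free
left `G`- and right `H`-actions, each moment map invariant under the other
action, whose fibres are exactly the orbits of the other action, and both
moment maps surjective. -/
structure IsEquivalenceData {ArrG ObjG ArrH ObjH X : Type}
    (G : GroupoidData ArrG ObjG) (H : GroupoidData ArrH ObjH)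
    (rX : X → ObjG) (sX : X → ObjH)
    (lact : ArrG → X → X) (ract : X → ArrH → X) : Prop where
  left_action : IsLeftActionOf G rX lact
  right_action : IsRightActionOf H sX ract
  commute : ∀ γ x η, G.s γ = rX x → sX x = H.r η →
    ract (lact γ x) η = lact γ (ract x η)
  rX_ract : ∀ x η, sX x = H.r η → rX (ract x η) = rX x
  sX_lact : ∀ γ x, G.s γ = rX x → sX (lact γ x) = sX x
  free_left : ∀ γ x, G.s γ = rX x → lact γ x = x → γ = G.unit (rX x)
  free_right : ∀ x η, sX x = H.r η → ract x η = x → η = H.unit (sX x)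
  rX_fibres : ∀ x y, rX x = rX y ↔ ∃ η, sX x = H.r η ∧ ract x η = y
  sX_fibres : ∀ x y, sX x = sX y ↔ ∃ γ, G.s γ = rX x ∧ lact γ x = y
  rX_surj : Function.Surjective rX
  sX_surj : Function.Surjective sX


/-- If groups `Ggr` and `Hgr` act freely and properly (and
continuously, commuting) on the left and right of a locally compact Hausdorff
space `X`, and `G := Ggr⋉(X/Hgr)`, `H := (Ggr\X)⋊Hgr` are the associated
transformation groupoids acting naturally on `X`, then
`((s,x·Hgr),x,(Ggr·x,t)) ↦ ((s,t),x)` is a groupoid isomorphism of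
`G⋉X⋊H` onto the transformation groupoid `(Ggr×Hgr)⋉X`. -/
theorem statement2 {Ggr Hgr X : Type} [Group Ggr] [Group Hgr]
    [TopologicalSpace Ggr] [TopologicalSpace Hgr] [TopologicalSpace X]
    [T2Space X] [LocallyCompactSpace X]
    [MulAction Ggr X] (ρ : X → Hgr → X)
    (hcontG : Continuous fun p : Ggr × X => p.1 • p.2)
    (hcontH : Continuous fun p : X × Hgr => ρ p.1 p.2)
    (hρ_one : ∀ x, ρ x 1 = x) (hρ_mul : ∀ x t t', ρ (ρ x t) t' = ρ x (t * t'))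
    (hcommute : ∀ (g : Ggr) x t, g • ρ x t = ρ (g • x) t)
    (hfreeG : ∀ (g : Ggr) (x : X), g • x = x → g = 1)
    (hfreeH : ∀ (x : X) (t : Hgr), ρ x t = x → t = 1)
    (hproperG : IsProperMap fun p : Ggr × X => (p.1 • p.2, p.2))
    (hproperH : IsProperMap fun p : X × Hgr => (ρ p.1 p.2, p.1))
    -- the orbit equivalence relations and quotients `X/Hgr`, `Ggr\X`:
    (stH stG : Setoid X)
    (hstH : ∀ x y, stH.r x y ↔ ∃ t : Hgr, ρ x t = y)
    (hstG : ∀ x y, stG.r x y ↔ ∃ g : Ggr, g • x = y)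
    -- the induced actions on the quotients:
    (actQH : Ggr → Quotient stH → Quotient stH)
    (hactQH : ∀ (g : Ggr) (x : X), actQH g (Quotient.mk stH x) = Quotient.mk stH (g • x))
    (actQG : Quotient stG → Hgr → Quotient stG)
    (hactQG : ∀ (x : X) (t : Hgr), actQG (Quotient.mk stG x) t = Quotient.mk stG (ρ x t))
    -- the transformation groupoid `G = Ggr ⋉ (X/Hgr)`:
    (DG : GroupoidData (Ggr × Quotient stH) (Quotient stH)) (hDG : DG.IsGroupoid)
    (hDGr : ∀ a, DG.r a = a.2) (hDGs : ∀ a, DG.s a = actQH a.1⁻¹ a.2)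
    (hDGunit : ∀ q, DG.unit q = (1, q))
    (hDGcomp : ∀ a b, DG.comp a b = (a.1 * b.1, a.2))
    (hDGinv : ∀ a, DG.inv a = (a.1⁻¹, actQH a.1⁻¹ a.2))
    -- the transformation groupoid `H = (Ggr\X) ⋊ Hgr`:
    (DH : GroupoidData (Quotient stG × Hgr) (Quotient stG)) (hDH : DH.IsGroupoid)
    (hDHr : ∀ a, DH.r a = a.1) (hDHs : ∀ a, DH.s a = actQG a.1 a.2)
    (hDHunit : ∀ w, DH.unit w = (w, 1))
    (hDHcomp : ∀ a b, DH.comp a b = (a.1, a.2 * b.2))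
    (hDHinv : ∀ a, DH.inv a = (actQG a.1 a.2, a.2⁻¹))
    -- `X` as a `(G,H)`-equivalence, with the natural actions:
    (heq : IsEquivalenceData DG DH (Quotient.mk stH) (Quotient.mk stG)
      (fun a x => a.1 • x) (fun x b => ρ x b.2))
    -- the iterated groupoid `E = G ⋉ X ⋊ H`:
    (E : GroupoidData {p : (Ggr × Quotient stH) × X × (Quotient stG × Hgr) //
      DG.r p.1 = Quotient.mk stH p.2.1 ∧ Quotient.mk stG p.2.1 = DH.r p.2.2} X)
    (hE : E.IsGroupoid)
    (hEr : ∀ a, E.r a = a.val.2.1)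
    (hEs : ∀ a, E.s a = ρ ((DG.inv a.val.1).1 • a.val.2.1) a.val.2.2.2)
    (hEunit : ∀ x,
      (E.unit x).val = (DG.unit (Quotient.mk stH x), x, DH.unit (Quotient.mk stG x)))
    (hEcomp : ∀ a b, E.s a = E.r b →
      (E.comp a b).val = (DG.comp a.val.1 b.val.1, a.val.2.1, DH.comp a.val.2.2 b.val.2.2))
    (hEinv : ∀ a, (E.inv a).val =
      (DG.inv a.val.1, ρ ((DG.inv a.val.1).1 • a.val.2.1) a.val.2.2.2, DH.inv a.val.2.2))
    -- the transformation groupoid `K = (Ggr × Hgr) ⋉ X`: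
    (K : GroupoidData ((Ggr × Hgr) × X) X) (hK : K.IsGroupoid)
    (hKr : ∀ a, K.r a = a.2) (hKs : ∀ a, K.s a = a.1.1⁻¹ • ρ a.2 a.1.2)
    (hKunit : ∀ x, K.unit x = ((1, 1), x))
    (hKcomp : ∀ a b, K.comp a b = ((a.1.1 * b.1.1, a.1.2 * b.1.2), a.2))
    (hKinv : ∀ a, K.inv a = ((a.1.1⁻¹, a.1.2⁻¹), a.1.1⁻¹ • ρ a.2 a.1.2))
    -- the comparison map `((s, x·Hgr), x, (Ggr·x, t)) ↦ ((s,t), x)`: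
    (Φ : {p : (Ggr × Quotient stH) × X × (Quotient stG × Hgr) //
      DG.r p.1 = Quotient.mk stH p.2.1 ∧ Quotient.mk stG p.2.1 = DH.r p.2.2} →
        (Ggr × Hgr) × X)
    (hΦ : ∀ a, Φ a = ((a.val.1.1, a.val.2.2.2), a.val.2.1)) :
    Function.Bijective Φ ∧
    (∀ a, K.r (Φ a) = E.r a) ∧ (∀ a, K.s (Φ a) = E.s a) ∧
    (∀ x, Φ (E.unit x) = K.unit x) ∧
    (∀ a b, E.s a = E.r b → Φ (E.comp a b) = K.comp (Φ a) (Φ b)) ∧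
    (∀ a, Φ (E.inv a) = K.inv (Φ a)) := by
  refine ⟨⟨?_, ?_⟩, ?_, ?_, ?_, ?_, ?_⟩
  · intro a b hab
    rw [hΦ, hΦ] at hab
    have h1 : a.val.1.1 = b.val.1.1 := congrArg (fun p => p.1.1) hab
    have h2 : a.val.2.2.2 = b.val.2.2.2 := congrArg (fun p => p.1.2) hab
    have h3 : a.val.2.1 = b.val.2.1 := congrArg Prod.snd hab
    apply Subtype.ext
    have ha1 := a.prop.1; have hb1 := b.prop.1
    have ha2 := a.prop.2; have hb2 := b.prop.2
    rw [hDGr] at ha1 hb1; rw [hDHr] at ha2 hb2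
    ext
    · exact h1
    · rw [ha1, hb1, h3]
    · exact h3
    · rw [← ha2, ← hb2, h3]
    · exact h2
  · intro ⟨⟨g, t⟩, x⟩
    refine ⟨⟨((g, Quotient.mk stH x), x, (Quotient.mk stG x, t)), ?_, ?_⟩, ?_⟩
    · rw [hDGr]
    · rw [hDHr]
    · rw [hΦ]
  · intro a; rw [hΦ, hKr, hEr]
  · intro a
    rw [hΦ, hKs, hEs, hDGinv, hcommute]
  · intro x
    rw [hΦ, hKunit]
    have := hEunit x
    simp only [this, hDGunit, hDHunit]
  · intro a b hab
    rw [hΦ, hΦ, hΦ, hKcomp]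
    have := hEcomp a b hab
    simp only [this, hDGcomp, hDHcomp]
  · intro a
    rw [hΦ, hΦ, hKinv]
    have := hEinv a
    simp only [this, hDGinv, hDHinv, hcommute]
end

section
/- Let E = G⋉X⋊H be the iterated transformation groupoid of a (G,H)-equivalence of second countable locally compact Hausdorff groupoids with Haar systems {λ^u} on G and {σ^v} on H. Then the family λ_E^x := λ^{r_X(x)} × δ_x × σ^{s_X(x)}, x ∈ X, is a Haar system on E: each λ_E^x is supported on r⁻¹(x), the family is left-invariant, and x ↦ ∫ f dλ_E^x is continuous for f ∈ C_c(E). -/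
open MeasureTheory Filter Topology

/-- Continuity of the structure maps of a topological groupoid. -/
structure IsTopologicalGroupoid {Arr Obj : Type} [TopologicalSpace Arr]
    [TopologicalSpace Obj] (D : GroupoidData Arr Obj) : Prop where
  continuous_r : Continuous D.r
  continuous_s : Continuous D.s
  continuous_unit : Continuous D.unit
  continuous_inv : Continuous D.inv
  continuous_comp : Continuous fun p : {q : Arr × Arr // D.s q.1 = D.r q.2} =>
    D.comp p.val.1 p.val.2

/-- A Haar system for groupoid data `D`, relative to a set `Real` of
"genuine" arrows (take `Real = Set.univ` for an honest groupoid): a family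
of Radon measures `κ u`, `u` a unit, with support exactly the genuine arrows
with range `u`, left invariant, and continuous against compactly supported
continuous functions. -/
def IsHaarSystemOn {Arr Obj : Type} [TopologicalSpace Arr] [TopologicalSpace Obj]
    [MeasurableSpace Arr] (D : GroupoidData Arr Obj) (Real : Set Arr)
    (κ : Obj → MeasureTheory.Measure Arr) : Prop :=
  (∀ u, κ u ({a | D.r a = u} ∩ Real)ᶜ = 0) ∧
  (∀ u U, IsOpen U → (U ∩ ({a | D.r a = u} ∩ Real)).Nonempty → 0 < κ u U) ∧
  (∀ u K, IsCompact K → κ u K < ⊤) ∧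
  (∀ a ∈ Real, ∀ f : Arr → ℝ, Continuous f → HasCompactSupport f →
    ∫ b, f (D.comp a b) ∂(κ (D.s a)) = ∫ b, f b ∂(κ (D.r a))) ∧
  (∀ f : Arr → ℝ, Continuous f → HasCompactSupport f →
    Continuous fun u => ∫ b, f b ∂(κ u))

/-- The measure `ν = μ ∘ κ` on the arrows induced by a measure `μ` on the
units and a Haar system `κ`. -/
noncomputable def nuMeasure {Arr Obj : Type} [MeasurableSpace Arr] [MeasurableSpace Obj]
    (κ : Obj → MeasureTheory.Measure Arr) (μ : MeasureTheory.Measure Obj) :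
    MeasureTheory.Measure Arr :=
  μ.bind κ

/-- Quasi-invariance of a measure `μ` on the unit space: `ν = μ∘κ` is
equivalent to its image under the inversion map. -/
def IsQuasiInvariant {Arr Obj : Type} [MeasurableSpace Arr] [MeasurableSpace Obj]
    (κ : Obj → MeasureTheory.Measure Arr) (inv : Arr → Arr)
    (μ : MeasureTheory.Measure Obj) : Prop :=
  nuMeasure κ μ ≪ (nuMeasure κ μ).map inv ∧ (nuMeasure κ μ).map inv ≪ nuMeasure κ μ


section EquivalenceSetting

variable {ArrG ObjG ArrH ObjH X : Type}

/-- The topological conditions making `X` a `(G,H)`-equivalence of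
topological groupoids: both groupoids are topological, the algebraic
equivalence conditions hold, the moment maps are continuous open surjections,
and the two actions are continuous and proper. -/
structure IsTopEquivalence [TopologicalSpace ArrG] [TopologicalSpace ObjG]
    [TopologicalSpace ArrH] [TopologicalSpace ObjH] [TopologicalSpace X]
    (G : GroupoidData ArrG ObjG) (H : GroupoidData ArrH ObjH)
    (rX : X → ObjG) (sX : X → ObjH)
    (lact : ArrG → X → X) (ract : X → ArrH → X) : Prop where
  G_groupoid : G.IsGroupoid
  H_groupoid : H.IsGroupoid
  G_top : IsTopologicalGroupoid G
  H_top : IsTopologicalGroupoid H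
  equivalence : IsEquivalenceData G H rX sX lact ract
  continuous_rX : Continuous rX
  continuous_sX : Continuous sX
  open_rX : IsOpenMap rX
  open_sX : IsOpenMap sX
  continuous_lact : Continuous fun p : {q : ArrG × X // G.s q.1 = rX q.2} =>
    lact p.val.1 p.val.2
  continuous_ract : Continuous fun p : {q : X × ArrH // sX q.1 = H.r q.2} =>
    ract p.val.1 p.val.2
  proper_lact : IsProperMap fun p : {q : ArrG × X // G.s q.1 = rX q.2} =>
    (lact p.val.1 p.val.2, p.val.2)
  proper_ract : IsProperMap fun p : {q : X × ArrH // sX q.1 = H.r q.2} =>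
    (ract p.val.1 p.val.2, p.val.2)

/-- The iterated transformation groupoid `E = G ⋉ X ⋊ H` (realized on the
ambient product; the genuine arrows form the set `ECond`). -/
def EData (G : GroupoidData ArrG ObjG) (H : GroupoidData ArrH ObjH)
    (rX : X → ObjG) (sX : X → ObjH)
    (lact : ArrG → X → X) (ract : X → ArrH → X) :
    GroupoidData (ArrG × X × ArrH) X where
  r := fun a => a.2.1
  s := fun a => ract (lact (G.inv a.1) a.2.1) a.2.2
  unit := fun x => (G.unit (rX x), x, H.unit (sX x))
  comp := fun a b => (G.comp a.1 b.1, a.2.1, H.comp a.2.2 b.2.2)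
  inv := fun a => (G.inv a.1, ract (lact (G.inv a.1) a.2.1) a.2.2, H.inv a.2.2)

/-- The set of genuine arrows of `E = G ⋉ X ⋊ H`:
`{(γ,x,η) : r(γ) = r_X(x), s_X(x) = r(η)}`. -/
def ECond (G : GroupoidData ArrG ObjG) (H : GroupoidData ArrH ObjH)
    (rX : X → ObjG) (sX : X → ObjH) : Set (ArrG × X × ArrH) :=
  {a | G.r a.1 = rX a.2.1 ∧ sX a.2.1 = H.r a.2.2}

/-- The transformation groupoid `Ḡ = G ⋉ X` (realized on the ambient
product; genuine arrows form `GbarCond`). -/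
def GbarData (G : GroupoidData ArrG ObjG) (rX : X → ObjG)
    (lact : ArrG → X → X) : GroupoidData (ArrG × X) X where
  r := fun p => p.2
  s := fun p => lact (G.inv p.1) p.2
  unit := fun x => (G.unit (rX x), x)
  comp := fun p q => (G.comp p.1 q.1, p.2)
  inv := fun p => (G.inv p.1, lact (G.inv p.1) p.2)

/-- Genuine arrows of `Ḡ = G ⋉ X`. -/
def GbarCond (G : GroupoidData ArrG ObjG) (rX : X → ObjG) : Set (ArrG × X) :=
  {p | G.r p.1 = rX p.2}

/-- The transformation groupoid `H̄ = X ⋊ H` (realized on the ambient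
product; genuine arrows form `HbarCond`). -/
def HbarData (H : GroupoidData ArrH ObjH) (sX : X → ObjH)
    (ract : X → ArrH → X) : GroupoidData (X × ArrH) X where
  r := fun p => p.1
  s := fun p => ract p.1 p.2
  unit := fun x => (x, H.unit (sX x))
  comp := fun p q => (p.1, H.comp p.2 q.2)
  inv := fun p => (ract p.1 p.2, H.inv p.2)

/-- Genuine arrows of `H̄ = X ⋊ H`. -/
def HbarCond (H : GroupoidData ArrH ObjH) (sX : X → ObjH) : Set (X × ArrH) :=
  {p | sX p.1 = H.r p.2}

variable [MeasurableSpace ArrG] [MeasurableSpace ArrH] [MeasurableSpace X]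

/-- The canonical Haar system `λ_E^x = λ^{r_X(x)} × δ_x × σ^{s_X(x)}` on
`E = G ⋉ X ⋊ H`. -/
noncomputable def EHaar (lamG : ObjG → MeasureTheory.Measure ArrG)
    (sigH : ObjH → MeasureTheory.Measure ArrH) (rX : X → ObjG) (sX : X → ObjH) :
    X → MeasureTheory.Measure (ArrG × X × ArrH) := fun x =>
  (lamG (rX x)).prod ((MeasureTheory.Measure.dirac x).prod (sigH (sX x)))

/-- The Haar system `λ^{r_X(x)} × δ_x` on `Ḡ = G ⋉ X`. -/
noncomputable def GbarHaar (lamG : ObjG → MeasureTheory.Measure ArrG)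
    (rX : X → ObjG) : X → MeasureTheory.Measure (ArrG × X) := fun x =>
  (lamG (rX x)).prod (MeasureTheory.Measure.dirac x)

/-- The Haar system `δ_x × σ^{s_X(x)}` on `H̄ = X ⋊ H`. -/
noncomputable def HbarHaar (sigH : ObjH → MeasureTheory.Measure ArrH)
    (sX : X → ObjH) : X → MeasureTheory.Measure (X × ArrH) := fun x =>
  (MeasureTheory.Measure.dirac x).prod (sigH (sX x))

end EquivalenceSetting

/-!
Integrating against `λ_E^x = λ^{r_X(x)} × δ_x × σ^{s_X(x)}` is integrating the slice
`(α, β) ↦ f (α, x, β)` against `λ^{r_X(x)} × σ^{s_X(x)}`. Multiplication in `E` acts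
coordinatewise on the `G`- and `H`-components and fixes `x`, so by Fubini left invariance of `λ_E`
reduces to that of `λ` and of `σ`. For continuity, integrate out one coordinate at a time:
integrating a continuous compactly supported `F (z, a)` against a family `κ z` that varies
continuously against `C_c` test functions gives a continuous compactly supported function of `z`,
since the slices `F (z, ·)` converge uniformly, within one compact set, as `z → z₀`.
-/

open Set

section Measure

theorem integrable_of_continuousOn_of_ae_mem {W : Type*} [TopologicalSpace W] [T2Space W]
    [MeasurableSpace W] [OpensMeasurableSpace W] {μ : Measure W} [IsFiniteMeasureOnCompacts μ]
    {g : W → ℝ} {S K : Set W} (hS : IsClosed S) (hSμ : ∀ᵐ w ∂μ, w ∈ S) (hg : ContinuousOn g S)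
    (hK : IsCompact K) (hgK : ∀ w ∈ S, g w ≠ 0 → w ∈ K) : Integrable g μ := by
  refine ((hg.mono inter_subset_left).integrableOn_compact
    (hK.inter_left hS)).integrable_of_ae_notMem_eq_zero ?_
  filter_upwards [hSμ] with w hwS hw
  by_contra hgw
  exact hw ⟨hwS, hgK w hwS hgw⟩

theorem Measure.prod_pos_of_isOpen {A B : Type*} [TopologicalSpace A] [TopologicalSpace B]
    [MeasurableSpace A] [MeasurableSpace B] {μ : Measure A} {ν : Measure B} [SFinite ν]
    {a : A} {b : B}
    (hμ : ∀ V, IsOpen V → a ∈ V → 0 < μ V) (hν : ∀ W, IsOpen W → b ∈ W → 0 < ν W)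
    {U : Set (A × B)} (hU : IsOpen U) (hab : (a, b) ∈ U) : 0 < μ.prod ν U := by
  obtain ⟨V, W, hV, hW, haV, hbW, hVW⟩ := isOpen_prod_iff.1 hU a b hab
  calc 0 < μ V * ν W := ENNReal.mul_pos (hμ V hV haV).ne' (hν W hW hbW).ne'
    _ = μ.prod ν (V ×ˢ W) := (Measure.prod_prod V W).symm
    _ ≤ μ.prod ν U := measure_mono hVW

theorem isClosedEmbedding_prodMk {X Y : Type*} [TopologicalSpace X] [TopologicalSpace Y]
    [T1Space X] (x : X) : IsClosedEmbedding (Prod.mk x : Y → X × Y) :=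
  .of_isEmbedding_isClosedMap (isEmbedding_prodMkRight x) (isClosedMap_prodMk_left x)

theorem integral_prod_dirac_prod {A X B : Type*} [MeasurableSpace A] [MeasurableSpace X]
    [MeasurableSpace B] [MeasurableSingletonClass X] (μ : Measure A) (ν : Measure B) [SFinite μ]
    [SFinite ν] (x : X) (g : A × X × B → ℝ) :
    ∫ b, g b ∂μ.prod ((Measure.dirac x).prod ν) = ∫ p, g (p.1, x, p.2) ∂μ.prod ν := by
  have hembed : MeasurableEmbedding (Prod.map id (Prod.mk x) : A × B → A × X × B) :=
    MeasurableEmbedding.id.prodMap (measurableEmbedding_prodMk_left x)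
  rw [Measure.dirac_prod, ← Measure.map_id (μ := μ),
    Measure.map_prod_map μ ν measurable_id measurable_prodMk_left, hembed.integral_map,
    Measure.map_id]
  rfl

theorem integral_prod_dirac_prod_eq_integral_integral {A X B : Type*} [TopologicalSpace A]
    [TopologicalSpace X] [TopologicalSpace B] [T1Space X] [MeasurableSpace A] [MeasurableSpace X]
    [MeasurableSpace B] [OpensMeasurableSpace (A × B)] [MeasurableSingletonClass X]
    (μ : Measure A) (ν : Measure B) [SFinite μ] [SFinite ν] [IsFiniteMeasureOnCompacts μ]
    [IsFiniteMeasureOnCompacts ν] (x : X) {f : A × X × B → ℝ} (hf : Continuous f)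
    (hfc : HasCompactSupport f) :
    ∫ b, f b ∂μ.prod ((Measure.dirac x).prod ν) = ∫ α, ∫ β, f (α, x, β) ∂ν ∂μ := by
  have hslice : IsClosedEmbedding (Prod.map id (Prod.mk x) : A × B → A × X × B) :=
    IsClosedEmbedding.id.prodMap (isClosedEmbedding_prodMk x)
  rw [integral_prod_dirac_prod]
  exact integral_prod (f ∘ Prod.map id (Prod.mk x))
    ((hf.comp hslice.continuous).integrable_of_hasCompactSupport
      (hfc.comp_isClosedEmbedding hslice))

end Measure

section VaguelyContinuous

variable {Z A : Type*} [TopologicalSpace Z] [TopologicalSpace A] [MeasurableSpace A]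

def VaguelyContinuous (κ : Z → Measure A) : Prop :=
  ∀ f : A → ℝ, Continuous f → HasCompactSupport f → Continuous fun z => ∫ a, f a ∂κ z

theorem VaguelyContinuous.comp {W : Type*} [TopologicalSpace W] {κ : Z → Measure A}
    (hκ : VaguelyContinuous κ) {p : W → Z} (hp : Continuous p) :
    VaguelyContinuous fun w => κ (p w) :=
  fun f hf hfc => (hκ f hf hfc).comp hp

theorem vaguelyContinuous_const (μ : Measure A) : VaguelyContinuous fun _ : Z => μ :=
  fun _ _ _ => continuous_const

theorem HasCompactSupport.parametric_integral [R1Space Z] (κ : Z → Measure A) {F : Z × A → ℝ}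
    (hF : HasCompactSupport F) : HasCompactSupport fun z => ∫ a, F (z, a) ∂κ z := by
  refine HasCompactSupport.intro (hF.image continuous_fst) fun z hz => ?_
  have hzero : ∀ a, F (z, a) = 0 := fun a =>
    image_eq_zero_of_notMem_tsupport fun h => hz ⟨_, h, rfl⟩
  simp [hzero]

theorem VaguelyContinuous.continuous_parametric_integral [T2Space A] [LocallyCompactSpace A]
    [OpensMeasurableSpace A] {κ : Z → Measure A} [∀ z, IsFiniteMeasureOnCompacts (κ z)]
    (hκ : VaguelyContinuous κ) {F : Z × A → ℝ} (hF : Continuous F) (hFc : HasCompactSupport F) :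
    Continuous fun z => ∫ a, F (z, a) ∂κ z := by
  set K := Prod.snd '' tsupport F
  have hK : IsCompact K := hFc.image continuous_snd
  have hFK : ∀ z, ∀ a ∉ K, F (z, a) = 0 := fun z a ha =>
    image_eq_zero_of_notMem_tsupport fun h => ha ⟨_, h, rfl⟩
  have hslice : ∀ z, Continuous fun a => F (z, a) := fun z => hF.comp (Continuous.prodMk_right z)
  have hslice_cs : ∀ z, HasCompactSupport fun a => F (z, a) := fun z =>
    HasCompactSupport.intro hK (hFK z)
  have hint : ∀ z w, Integrable (fun a => F (z, a)) (κ w) := fun z _ =>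
    (hslice z).integrable_of_hasCompactSupport (hslice_cs z)
  -- `χ` dominates the indicator of `K`, which carries all the slices
  obtain ⟨χ, hχK, -, hχc, hχ01⟩ :=
    exists_continuous_one_zero_of_isCompact hK isClosed_empty (disjoint_empty K)
  rw [continuous_iff_continuousAt]
  intro z₀
  have hfixed : Tendsto (fun z => ∫ a, F (z₀, a) ∂κ z) (𝓝 z₀) (𝓝 (∫ a, F (z₀, a) ∂κ z₀)) :=
    (hκ _ (hslice z₀) (hslice_cs z₀)).continuousAt
  suffices hdiff : Tendsto (fun z => ∫ a, F (z, a) ∂κ z - ∫ a, F (z₀, a) ∂κ z) (𝓝 z₀) (𝓝 0) by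
    simpa [ContinuousAt] using hdiff.add hfixed
  rw [Metric.tendsto_nhds]
  intro ε hε
  set C := ∫ a, χ a ∂κ z₀ + 1
  have hC : 0 < C := by
    have : 0 ≤ ∫ a, χ a ∂κ z₀ := integral_nonneg fun a => (hχ01 a).1
    positivity
  have hχ_near : ∀ᶠ z in 𝓝 z₀, ∫ a, χ a ∂κ z < C :=
    (hκ χ χ.continuous hχc).continuousAt.eventually (gt_mem_nhds (lt_add_one _))
  obtain ⟨V, hV, hVunif⟩ := hK.mem_uniformity_of_prod (f := fun z a => F (z, a)) (s := univ)
    (hF.comp continuous_id).continuousOn (mem_univ z₀) (Metric.dist_mem_uniformity (div_pos hε hC))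
  rw [nhdsWithin_univ] at hV
  filter_upwards [hV, hχ_near] with z hzV hzχ
  have hbound : ∀ a, ‖F (z, a) - F (z₀, a)‖ ≤ ε / C * χ a := by
    intro a
    by_cases ha : a ∈ K
    · rw [hχK ha, Pi.one_apply, mul_one, ← dist_eq_norm]
      exact (hVunif z hzV a ha).le
    · simp [hFK z a ha, hFK z₀ a ha, mul_nonneg (div_pos hε hC).le (hχ01 a).1]
  rw [dist_zero_right, ← integral_sub (hint z z) (hint z₀ z)]
  calc ‖∫ a, F (z, a) - F (z₀, a) ∂κ z‖
      ≤ ∫ a, ε / C * χ a ∂κ z :=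
        norm_integral_le_of_norm_le
          ((χ.continuous.integrable_of_hasCompactSupport hχc).const_mul _)
          (Eventually.of_forall hbound)
    _ = ε / C * ∫ a, χ a ∂κ z := integral_const_mul _ _
    _ < ε / C * C := by gcongr
    _ = ε := div_mul_cancel₀ ε hC.ne'

end VaguelyContinuous

namespace GroupoidData

variable {Arr Obj : Type} {D : GroupoidData Arr Obj}

theorem IsGroupoid.inv_comp_comp (hD : D.IsGroupoid) {γ α : Arr} (h : D.s γ = D.r α) :
    D.comp (D.inv γ) (D.comp γ α) = α := by
  rw [← hD.comp_assoc _ γ α (hD.s_inv γ) h, hD.inv_comp, h, hD.unit_comp]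

theorem IsGroupoid.comp_inv_comp (hD : D.IsGroupoid) {γ k : Arr} (h : D.r k = D.r γ) :
    D.comp γ (D.comp (D.inv γ) k) = k := by
  rw [← hD.comp_assoc γ _ k (hD.r_inv γ).symm ((hD.s_inv γ).trans h.symm), hD.comp_inv, ← h,
    hD.unit_comp]

theorem IsGroupoid.fiber_inter_comp_preimage (hD : D.IsGroupoid) (γ : Arr) (K : Set Arr) :
    {α | D.r α = D.s γ} ∩ D.comp γ ⁻¹' K = D.comp (D.inv γ) '' ({k | D.r k = D.r γ} ∩ K) := by
  ext α
  constructor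
  · rintro ⟨hα, hαK⟩
    exact ⟨D.comp γ α, ⟨hD.r_comp γ α hα.symm, hαK⟩, hD.inv_comp_comp hα.symm⟩
  · rintro ⟨k, ⟨hk, hkK⟩, rfl⟩
    refine ⟨?_, ?_⟩
    · show D.r (D.comp (D.inv γ) k) = D.s γ
      rw [hD.r_comp _ k ((hD.s_inv γ).trans hk.symm), hD.r_inv]
    · show D.comp γ (D.comp (D.inv γ) k) ∈ K
      rwa [hD.comp_inv_comp hk]

end GroupoidData

section TopologicalGroupoid

variable {Arr Obj : Type} [TopologicalSpace Arr] [TopologicalSpace Obj] {D : GroupoidData Arr Obj}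

theorem IsTopologicalGroupoid.continuousOn_comp_left (hD : IsTopologicalGroupoid D) (γ : Arr) :
    ContinuousOn (D.comp γ) {α | D.r α = D.s γ} := by
  rw [continuousOn_iff_continuous_domRestrict]
  exact hD.continuous_comp.comp
    ((continuous_const.prodMk continuous_subtype_val).subtype_mk fun α => α.2.symm)

theorem IsTopologicalGroupoid.isCompact_fiber_inter_comp_preimage [T2Space Obj]
    (hT : IsTopologicalGroupoid D) (hD : D.IsGroupoid) (γ : Arr) {K : Set Arr} (hK : IsCompact K) :
    IsCompact ({α | D.r α = D.s γ} ∩ D.comp γ ⁻¹' K) := by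
  rw [hD.fiber_inter_comp_preimage]
  refine (hK.inter_left (isClosed_eq hT.continuous_r continuous_const)).image_of_continuousOn
    ((hT.continuousOn_comp_left (D.inv γ)).mono fun k hk => ?_)
  exact hk.1.trans (hD.s_inv γ).symm

end TopologicalGroupoid

namespace IsHaarSystemOn

variable {Arr Obj : Type} [TopologicalSpace Arr] [TopologicalSpace Obj] [MeasurableSpace Arr]
  {D : GroupoidData Arr Obj} {R : Set Arr} {κ : Obj → Measure Arr}

theorem ae_mem (h : IsHaarSystemOn D R κ) (u : Obj) : ∀ᵐ a ∂κ u, D.r a = u ∧ a ∈ R := by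
  filter_upwards [measure_eq_zero_iff_ae_notMem.1 (h.1 u)] with a ha
  simpa using ha

theorem isFiniteMeasureOnCompacts (h : IsHaarSystemOn D R κ) (u : Obj) :
    IsFiniteMeasureOnCompacts (κ u) :=
  ⟨fun {K} hK => h.2.2.1 u K hK⟩

theorem vaguelyContinuous (h : IsHaarSystemOn D R κ) : VaguelyContinuous κ :=
  h.2.2.2.2

theorem sigmaFinite [SigmaCompactSpace Arr] (h : IsHaarSystemOn D R κ) (u : Obj) :
    SigmaFinite (κ u) :=
  have := h.isFiniteMeasureOnCompacts u
  inferInstance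

end IsHaarSystemOn

section ProductHaar

variable {ArrG ObjG ArrH ObjH : Type} [TopologicalSpace ArrG] [TopologicalSpace ObjG]
  [TopologicalSpace ArrH] [TopologicalSpace ObjH] [MeasurableSpace ArrG] [MeasurableSpace ArrH]
  {G : GroupoidData ArrG ObjG} {H : GroupoidData ArrH ObjH}
  {lamG : ObjG → Measure ArrG} {sigH : ObjH → Measure ArrH}

theorem integrable_comp_prod_comp [T2Space ObjG] [T2Space ObjH] [T2Space ArrG] [T2Space ArrH]
    [OpensMeasurableSpace (ArrG × ArrH)]
    (hG : G.IsGroupoid) (hGt : IsTopologicalGroupoid G) (hlamG : IsHaarSystemOn G univ lamG)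
    (hH : H.IsGroupoid) (hHt : IsTopologicalGroupoid H) (hsigH : IsHaarSystemOn H univ sigH)
    (γ : ArrG) (η : ArrH) {F : ArrG × ArrH → ℝ} (hF : Continuous F) (hFc : HasCompactSupport F) :
    Integrable (fun p => F (G.comp γ p.1, H.comp η p.2)) ((lamG (G.s γ)).prod (sigH (H.s η))) := by
  have := hlamG.isFiniteMeasureOnCompacts (G.s γ)
  have := hsigH.isFiniteMeasureOnCompacts (H.s η)
  set S := {α | G.r α = G.s γ} ×ˢ {β | H.r β = H.s η}
  have hS : IsClosed S := (isClosed_eq hGt.continuous_r continuous_const).prod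
    (isClosed_eq hHt.continuous_r continuous_const)
  have hSμ : ∀ᵐ p ∂(lamG (G.s γ)).prod (sigH (H.s η)), p ∈ S := by
    filter_upwards [Measure.quasiMeasurePreserving_fst.ae (hlamG.ae_mem (G.s γ)),
      Measure.quasiMeasurePreserving_snd.ae (hsigH.ae_mem (H.s η))] with p hp1 hp2
    exact ⟨hp1.1, hp2.1⟩
  refine integrable_of_continuousOn_of_ae_mem hS hSμ ?_
    ((hGt.isCompact_fiber_inter_comp_preimage hG γ (hFc.image continuous_fst)).prod
      (hHt.isCompact_fiber_inter_comp_preimage hH η (hFc.image continuous_snd))) ?_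
  · exact hF.comp_continuousOn
      (((hGt.continuousOn_comp_left γ).comp continuousOn_fst fun p hp => hp.1).prodMk
        ((hHt.continuousOn_comp_left η).comp continuousOn_snd fun p hp => hp.2))
  · intro p hp hFp
    have hmem := subset_tsupport _ hFp
    exact ⟨⟨hp.1, _, hmem, rfl⟩, ⟨hp.2, _, hmem, rfl⟩⟩

theorem integral_comp_prod_comp [T2Space ObjG] [T2Space ObjH] [T2Space ArrG] [T2Space ArrH]
    [LocallyCompactSpace ArrH] [SigmaCompactSpace ArrG] [SigmaCompactSpace ArrH]
    [OpensMeasurableSpace ArrH] [OpensMeasurableSpace (ArrG × ArrH)]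
    (hG : G.IsGroupoid) (hGt : IsTopologicalGroupoid G) (hlamG : IsHaarSystemOn G univ lamG)
    (hH : H.IsGroupoid) (hHt : IsTopologicalGroupoid H) (hsigH : IsHaarSystemOn H univ sigH)
    (γ : ArrG) (η : ArrH) {F : ArrG × ArrH → ℝ} (hF : Continuous F) (hFc : HasCompactSupport F) :
    ∫ p, F (G.comp γ p.1, H.comp η p.2) ∂(lamG (G.s γ)).prod (sigH (H.s η)) =
      ∫ p, F p ∂(lamG (G.r γ)).prod (sigH (H.r η)) := by
  have := hlamG.isFiniteMeasureOnCompacts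
  have := hsigH.isFiniteMeasureOnCompacts
  have := hlamG.sigmaFinite
  have := hsigH.sigmaFinite
  have hslice : ∀ c, Continuous fun β => F (c, β) := fun c => hF.comp (.prodMk_right c)
  have hslice_cs : ∀ c, HasCompactSupport fun β => F (c, β) := fun c =>
    hFc.comp_isClosedEmbedding (isClosedEmbedding_prodMk c)
  rw [integral_prod _ (integrable_comp_prod_comp hG hGt hlamG hH hHt hsigH γ η hF hFc),
    integral_prod _ (hF.integrable_of_hasCompactSupport hFc)]
  calc ∫ α, ∫ β, F (G.comp γ α, H.comp η β) ∂sigH (H.s η) ∂lamG (G.s γ)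
      = ∫ α, ∫ β, F (G.comp γ α, β) ∂sigH (H.r η) ∂lamG (G.s γ) := by
        congr 1 with α
        exact hsigH.2.2.2.1 η trivial _ (hslice _) (hslice_cs _)
    _ = ∫ α, ∫ β, F (α, β) ∂sigH (H.r η) ∂lamG (G.r γ) :=
        hlamG.2.2.2.1 γ trivial (fun c => ∫ β, F (c, β) ∂sigH (H.r η))
          ((vaguelyContinuous_const _).continuous_parametric_integral hF hFc)
          (HasCompactSupport.parametric_integral _ hFc)

end ProductHaar

section IteratedTransformationGroupoid

variable {ArrG ObjG ArrH ObjH X : Type}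
  {G : GroupoidData ArrG ObjG} {H : GroupoidData ArrH ObjH}
  {rX : X → ObjG} {sX : X → ObjH} {lact : ArrG → X → X} {ract : X → ArrH → X}

theorem IsEquivalenceData.moment_EData_s (heq : IsEquivalenceData G H rX sX lact ract)
    (hG : G.IsGroupoid) {a : ArrG × X × ArrH} (ha : a ∈ ECond G H rX sX) :
    rX ((EData G H rX sX lact ract).s a) = G.s a.1 ∧
      sX ((EData G H rX sX lact ract).s a) = H.s a.2.2 := by
  obtain ⟨γ, x, η⟩ := a
  obtain ⟨hγ, hη⟩ := ha
  have hγx : G.s (G.inv γ) = rX x := (hG.s_inv γ).trans hγ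
  have hη' : sX (lact (G.inv γ) x) = H.r η := (heq.sX_lact _ _ hγx).trans hη
  exact ⟨(heq.rX_ract _ _ hη').trans ((heq.left_action.moment _ _ hγx).trans (hG.r_inv γ)),
    heq.right_action.moment _ _ hη'⟩

variable [TopologicalSpace ArrG] [TopologicalSpace ObjG] [TopologicalSpace ArrH]
  [TopologicalSpace ObjH] [MeasurableSpace ArrG] [MeasurableSpace ArrH]
  [MeasurableSpace X] {lamG : ObjG → Measure ArrG} {sigH : ObjH → Measure ArrH}

theorem EHaar_compl_eq_zero [MeasurableSingletonClass X] {R : Set ArrG} {S : Set ArrH}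
    (hlamG : IsHaarSystemOn G R lamG) (hsigH : IsHaarSystemOn H S sigH) (x : X) :
    EHaar lamG sigH rX sX x
      ({a | (EData G H rX sX lact ract).r a = x} ∩ ECond G H rX sX)ᶜ = 0 := by
  rw [← mem_ae_iff]
  have hG : ∀ᵐ a ∂EHaar lamG sigH rX sX x, G.r a.1 = rX x ∧ a.1 ∈ R :=
    Measure.quasiMeasurePreserving_fst.ae (hlamG.ae_mem (rX x))
  have hX : ∀ᵐ a ∂EHaar lamG sigH rX sX x, a.2.1 = x :=
    Measure.quasiMeasurePreserving_snd.ae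
      (Measure.quasiMeasurePreserving_fst.ae ((ae_dirac_iff measurableSet_eq).2 rfl))
  have hH : ∀ᵐ a ∂EHaar lamG sigH rX sX x, H.r a.2.2 = sX x ∧ a.2.2 ∈ S :=
    Measure.quasiMeasurePreserving_snd.ae
      (Measure.quasiMeasurePreserving_snd.ae (hsigH.ae_mem (sX x)))
  filter_upwards [hG, hX, hH] with a haG haX haH
  exact ⟨haX, haX ▸ haG.1, haX ▸ haH.1.symm⟩

theorem EHaar_pos_of_isOpen [TopologicalSpace X] [SigmaCompactSpace ArrH]
    (hlamG : IsHaarSystemOn G univ lamG) (hsigH : IsHaarSystemOn H univ sigH) (x : X) (U : Set (ArrG × X × ArrH)) (hU : IsOpen U)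
    (hxU : (U ∩ ({a | (EData G H rX sX lact ract).r a = x} ∩ ECond G H rX sX)).Nonempty) :
    0 < EHaar lamG sigH rX sX x U := by
  obtain ⟨⟨γ, y, η⟩, haU, hyx, hγ, hη⟩ := hxU
  obtain rfl : y = x := hyx
  have := hsigH.sigmaFinite (sX y)
  refine Measure.prod_pos_of_isOpen (fun V hV hγV => hlamG.2.1 _ V hV ⟨γ, hγV, hγ, trivial⟩)
    (fun W hW hyηW => Measure.prod_pos_of_isOpen ?_ ?_ hW hyηW) hU haU
  · intro V _ hyV
    simp [Measure.dirac_apply_of_mem hyV]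
  · exact fun W hW hηW => hsigH.2.1 _ W hW ⟨η, hηW, hη.symm, trivial⟩

theorem isFiniteMeasureOnCompacts_EHaar [TopologicalSpace X] {R : Set ArrG} {S : Set ArrH}
    (hlamG : IsHaarSystemOn G R lamG) (hsigH : IsHaarSystemOn H S sigH) (x : X) :
    IsFiniteMeasureOnCompacts (EHaar lamG sigH rX sX x) :=
  have := hlamG.isFiniteMeasureOnCompacts (rX x)
  have := hsigH.isFiniteMeasureOnCompacts (sX x)
  Measure.prod.instIsFiniteMeasureOnCompacts _ _

theorem continuous_integral_EHaar [TopologicalSpace X] [T2Space ArrG] [T2Space ArrH] [T2Space X]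
    [LocallyCompactSpace ArrG] [LocallyCompactSpace ArrH] [SigmaCompactSpace ArrG]
    [SigmaCompactSpace ArrH] [OpensMeasurableSpace ArrG] [OpensMeasurableSpace ArrH]
    [OpensMeasurableSpace (ArrG × ArrH)] [MeasurableSingletonClass X] {R : Set ArrG} {S : Set ArrH}
    (hrX : Continuous rX) (hsX : Continuous sX) (hlamG : IsHaarSystemOn G R lamG)
    (hsigH : IsHaarSystemOn H S sigH) {f : ArrG × X × ArrH → ℝ} (hf : Continuous f)
    (hfc : HasCompactSupport f) :
    Continuous fun x => ∫ b, f b ∂EHaar lamG sigH rX sX x := by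
  have := hlamG.isFiniteMeasureOnCompacts
  have := hsigH.isFiniteMeasureOnCompacts
  have := hlamG.sigmaFinite
  have := hsigH.sigmaFinite
  have hinner : Continuous fun q : ArrG × X => ∫ β, f (q.1, q.2, β) ∂sigH (sX q.2) :=
    (hsigH.vaguelyContinuous.comp (hsX.comp continuous_snd)).continuous_parametric_integral
      (hf.comp (Homeomorph.prodAssoc _ _ _).continuous) (hfc.comp_homeomorph _)
  have hinner_cs : HasCompactSupport fun q : ArrG × X => ∫ β, f (q.1, q.2, β) ∂sigH (sX q.2) :=
    HasCompactSupport.parametric_integral _ (hfc.comp_homeomorph (Homeomorph.prodAssoc _ _ _))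
  refine ((hlamG.vaguelyContinuous.comp hrX).continuous_parametric_integral
    (hinner.comp continuous_swap) (hinner_cs.comp_homeomorph (Homeomorph.prodComm _ _))).congr
    fun x => ?_
  exact (integral_prod_dirac_prod_eq_integral_integral (lamG (rX x)) (sigH (sX x)) x hf hfc).symm

theorem integral_comp_EHaar [TopologicalSpace X] [T2Space ObjG] [T2Space ObjH] [T2Space ArrG]
    [T2Space ArrH] [T1Space X] [LocallyCompactSpace ArrH] [SigmaCompactSpace ArrG]
    [SigmaCompactSpace ArrH] [OpensMeasurableSpace ArrH] [OpensMeasurableSpace (ArrG × ArrH)]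
    [MeasurableSingletonClass X] (heq : IsTopEquivalence G H rX sX lact ract)
    (hlamG : IsHaarSystemOn G univ lamG) (hsigH : IsHaarSystemOn H univ sigH)
    {a : ArrG × X × ArrH} (ha : a ∈ ECond G H rX sX) {f : ArrG × X × ArrH → ℝ}
    (hf : Continuous f) (hfc : HasCompactSupport f) :
    ∫ b, f ((EData G H rX sX lact ract).comp a b)
        ∂EHaar lamG sigH rX sX ((EData G H rX sX lact ract).s a) =
      ∫ b, f b ∂EHaar lamG sigH rX sX ((EData G H rX sX lact ract).r a) := by
  have := hlamG.sigmaFinite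
  have := hsigH.sigmaFinite
  obtain ⟨hrs, hss⟩ := heq.equivalence.moment_EData_s heq.G_groupoid ha
  obtain ⟨γ, x, η⟩ := a
  obtain ⟨hγ, hη⟩ := ha
  have hslice : IsClosedEmbedding (Prod.map id (Prod.mk x) : ArrG × ArrH → ArrG × X × ArrH) :=
    IsClosedEmbedding.id.prodMap (isClosedEmbedding_prodMk x)
  calc ∫ b, f ((EData G H rX sX lact ract).comp (γ, x, η) b)
        ∂EHaar lamG sigH rX sX ((EData G H rX sX lact ract).s (γ, x, η))
      = ∫ p, f (G.comp γ p.1, x, H.comp η p.2) ∂(lamG (G.s γ)).prod (sigH (H.s η)) := by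
        rw [EHaar, ← hrs, ← hss, integral_prod_dirac_prod]
        rfl
    _ = ∫ p, f (p.1, x, p.2) ∂(lamG (G.r γ)).prod (sigH (H.r η)) :=
        integral_comp_prod_comp heq.G_groupoid heq.G_top hlamG heq.H_groupoid heq.H_top hsigH γ η
          (hf.comp hslice.continuous) (hfc.comp_isClosedEmbedding hslice)
    _ = ∫ b, f b ∂EHaar lamG sigH rX sX ((EData G H rX sX lact ract).r (γ, x, η)) := by
        rw [EHaar, integral_prod_dirac_prod]
        simp only [hγ, hη, EData]

end IteratedTransformationGroupoid

theorem statement3_general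
    {ArrG ObjG ArrH ObjH X : Type}
    [TopologicalSpace ArrG] [TopologicalSpace ObjG] [TopologicalSpace ArrH]
    [TopologicalSpace ObjH] [TopologicalSpace X]
    [T2Space ArrG] [T2Space ObjG] [T2Space ArrH] [T2Space ObjH] [T2Space X]
    [SecondCountableTopology ArrG]
    [SecondCountableTopology ArrH]
    [LocallyCompactSpace ArrG] [LocallyCompactSpace ArrH]
    [MeasurableSpace ArrG] [BorelSpace ArrG] [MeasurableSpace ArrH] [BorelSpace ArrH]
    [MeasurableSpace X] [BorelSpace X]
    (G : GroupoidData ArrG ObjG) (H : GroupoidData ArrH ObjH)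
    (rX : X → ObjG) (sX : X → ObjH) (lact : ArrG → X → X) (ract : X → ArrH → X)
    (heq : IsTopEquivalence G H rX sX lact ract)
    (lamG : ObjG → MeasureTheory.Measure ArrG)
    (hlamG : IsHaarSystemOn G Set.univ lamG)
    (sigH : ObjH → MeasureTheory.Measure ArrH)
    (hsigH : IsHaarSystemOn H Set.univ sigH)
    : IsHaarSystemOn (EData G H rX sX lact ract) (ECond G H rX sX)
      (EHaar lamG sigH rX sX) := by
  have := isFiniteMeasureOnCompacts_EHaar (rX := rX) (sX := sX) hlamG hsigH
  exact ⟨EHaar_compl_eq_zero hlamG hsigH, EHaar_pos_of_isOpen hlamG hsigH,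
    fun _ _ hK => hK.measure_lt_top,
    fun _ ha _ hf hfc => integral_comp_EHaar heq hlamG hsigH ha hf hfc,
    fun _ hf hfc =>
      continuous_integral_EHaar heq.continuous_rX heq.continuous_sX hlamG hsigH hf hfc⟩

/-- For a `(G,H)`-equivalence `X` of second countable
locally compact Hausdorff groupoids with Haar systems `λ` and `σ`, the family
`λ_E^x = λ^{r_X(x)} × δ_x × σ^{s_X(x)}` is a Haar system on the iterated
transformation groupoid `E = G ⋉ X ⋊ H`: each `λ_E^x` is supported exactly on
`r⁻¹(x)`, the family is left invariant and continuous. -/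
theorem statement3
    {ArrG ObjG ArrH ObjH X : Type}
    [TopologicalSpace ArrG] [TopologicalSpace ObjG] [TopologicalSpace ArrH]
    [TopologicalSpace ObjH] [TopologicalSpace X]
    [T2Space ArrG] [T2Space ObjG] [T2Space ArrH] [T2Space ObjH] [T2Space X]
    [SecondCountableTopology ArrG] [SecondCountableTopology ObjG]
    [SecondCountableTopology ArrH] [SecondCountableTopology ObjH]
    [SecondCountableTopology X]
    [LocallyCompactSpace ArrG] [LocallyCompactSpace ObjG] [LocallyCompactSpace ArrH]
    [LocallyCompactSpace ObjH] [LocallyCompactSpace X]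
    [MeasurableSpace ArrG] [BorelSpace ArrG] [MeasurableSpace ArrH] [BorelSpace ArrH]
    [MeasurableSpace X] [BorelSpace X] [MeasurableSpace ObjH] [BorelSpace ObjH]
    (G : GroupoidData ArrG ObjG) (H : GroupoidData ArrH ObjH)
    (rX : X → ObjG) (sX : X → ObjH) (lact : ArrG → X → X) (ract : X → ArrH → X)
    (heq : IsTopEquivalence G H rX sX lact ract)
    (lamG : ObjG → MeasureTheory.Measure ArrG)
    (hlamG : IsHaarSystemOn G Set.univ lamG)
    (sigH : ObjH → MeasureTheory.Measure ArrH)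
    (hsigH : IsHaarSystemOn H Set.univ sigH)
    : IsHaarSystemOn (EData G H rX sX lact ract) (ECond G H rX sX)
      (EHaar lamG sigH rX sX) :=
  statement3_general G H rX sX lact ract heq lamG hlamG sigH hsigH
end

section
/- Let X be a (G,H)-equivalence, E = G⋉X⋊H, and μ a Radon measure on X quasi-invariant with respect to E. Then the push-forward measure τ = (s_X)_*μ on H⁽⁰⁾ is quasi-invariant with respect to H. -/
open MeasureTheory Filter Topology

/-! A cylinder `G × X × A` is `ν_E`-null exactly when `A` is `ν_H`-null, where `ν_E = μ ∘ λ_E`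
and `ν_H = τ ∘ σ`: indeed `λ_E^x(G × X × A) = λ^{r_X(x)}(G) σ^{s_X(x)}(A)` and `λ^u(G) > 0`.
Inversion in `E` inverts the `H`-coordinate, so it pulls the cylinder over `A` back to the
cylinder over `A⁻¹`. Hence the null sets of `ν_H` and of its image under inversion are read off
from those of `ν_E` and of its image under inversion, which coincide by hypothesis.

Measure-theoretically, a Haar system is a measurable family of measures (it is continuous
against `C_c`), so `ν = μ ∘ κ` is obtained by integrating `κ`; and inversion in `E` is continuous
on the closed conull set of genuine arrows, hence `ν_E`-a.e. measurable. -/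

open Set
open scoped ENNReal

theorem Measurable.measure_of_isPiSystem_of_exhaustion {α β : Type*} [MeasurableSpace α]
    [MeasurableSpace β] {μ : α → Measure β} {S : Set (Set β)}
    (hgen : ‹MeasurableSpace β› = .generateFrom S) (hpi : IsPiSystem S)
    {W : ℕ → Set β} (hWS : ∀ n, W n ∈ S) (hW : Monotone W) (hWuniv : ⋃ n, W n = univ)
    (hWfin : ∀ a n, μ a (W n) ≠ ∞) (h_basic : ∀ s ∈ S, Measurable fun a ↦ μ a s) :
    Measurable μ := by
  have hSmeas : ∀ s ∈ S, MeasurableSet s := fun s hs => hgen ▸ .basic s hs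
  have hrestrict : ∀ n, Measurable fun a ↦ (μ a).restrict (W n) := by
    intro n
    have : ∀ a, IsFiniteMeasure ((μ a).restrict (W n)) :=
      fun a => isFiniteMeasure_restrict.2 (hWfin a n)
    refine .measure_of_isPiSystem hgen hpi (fun s hs => ?_) ?_
    · simp_rw [Measure.restrict_apply (hSmeas s hs)]
      rcases (s ∩ W n).eq_empty_or_nonempty with h | h
      · simp [h]
      · exact h_basic _ (hpi s hs _ (hWS n) h)
    · simpa using h_basic _ (hWS n)
  refine Measure.measurable_of_measurable_coe _ fun s hs => ?_
  have hsup : ∀ a, μ a s = ⨆ n, (μ a).restrict (W n) s := fun a => by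
    rw [← Measure.restrict_iUnion_apply_eq_iSup hW.directed_le hs, hWuniv, Measure.restrict_univ]
  simp_rw [hsup]
  exact .iSup fun n => (Measure.measurable_coe hs).comp (hrestrict n)

theorem CompactExhaustion.iUnion_interior {X : Type*} [TopologicalSpace X]
    (K : CompactExhaustion X) : ⋃ n, interior (K n) = univ :=
  eq_univ_of_forall fun x => mem_iUnion.2 ⟨K.find x + 1, K.subset_interior_succ _ (K.mem_find x)⟩

theorem CompactExhaustion.monotone_interior {X : Type*} [TopologicalSpace X]
    (K : CompactExhaustion X) : Monotone fun n => interior (K n) :=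
  fun _ _ h => interior_mono (K.subset h)

theorem Measurable.prod_measure {ι α β : Type*} [MeasurableSpace ι]
    [TopologicalSpace α] [MeasurableSpace α] [OpensMeasurableSpace α]
    [SigmaCompactSpace α] [WeaklyLocallyCompactSpace α]
    [TopologicalSpace β] [MeasurableSpace β] [OpensMeasurableSpace β]
    [SigmaCompactSpace β] [WeaklyLocallyCompactSpace β]
    {μ : ι → Measure α} {ν : ι → Measure β} [∀ i, IsFiniteMeasureOnCompacts (μ i)]
    [∀ i, IsFiniteMeasureOnCompacts (ν i)] (hμ : Measurable μ) (hν : Measurable ν) :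
    Measurable fun i => (μ i).prod (ν i) := by
  have hrect : ∀ s ∈ image2 (· ×ˢ ·) {s : Set α | MeasurableSet s} {t : Set β | MeasurableSet t},
      Measurable fun i => (μ i).prod (ν i) s := by
    rintro _ ⟨s, hs, t, ht, rfl⟩
    simp_rw [Measure.prod_prod]
    exact ((Measure.measurable_coe hs).comp hμ).mul ((Measure.measurable_coe ht).comp hν)
  let K := CompactExhaustion.choice α
  let L := CompactExhaustion.choice β
  refine .measure_of_isPiSystem_of_exhaustion generateFrom_prod.symm isPiSystem_prod
    (W := fun n => interior (K n) ×ˢ interior (L n))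
    (fun n => mem_image2_of_mem isOpen_interior.measurableSet isOpen_interior.measurableSet)
    (fun _ _ h => Set.prod_mono (K.monotone_interior h) (L.monotone_interior h)) ?_
    (fun i n => ?_) hrect
  · rw [iUnion_prod_of_monotone K.monotone_interior L.monotone_interior,
      K.iUnion_interior, L.iUnion_interior, univ_prod_univ]
  · exact ((measure_mono (Set.prod_mono interior_subset interior_subset)).trans_lt
      ((K.isCompact n).prod (L.isCompact n)).measure_lt_top).ne

theorem IsOpen.exists_seq_iSup_lintegral_eq {Y : Type*} [TopologicalSpace Y] [MeasurableSpace Y]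
    [OpensMeasurableSpace Y] [T2Space Y] [LocallyCompactSpace Y] [SecondCountableTopology Y]
    {U : Set Y} (hU : IsOpen U) :
    ∃ f : ℕ → C(Y, ℝ), (∀ n, HasCompactSupport (f n)) ∧ (∀ n y, 0 ≤ f n y) ∧
      ∀ μ : Measure Y, μ U = ⨆ n, ∫⁻ y, ENNReal.ofReal (f n y) ∂μ := by
  have := hU.locallyCompactSpace
  let K n : Set Y := (↑) '' compactCovering U n
  have hK n : IsCompact (K n) := (isCompact_compactCovering U n).image continuous_subtype_val
  have hKU n : K n ⊆ U := by rintro _ ⟨y, _, rfl⟩; exact y.2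
  have hKmono : Monotone K := fun _ _ h => image_mono (compactCovering_subset U h)
  have hKunion : ⋃ n, K n = U := by
    rw [← image_iUnion, iUnion_compactCovering, image_univ, Subtype.range_val]
  choose f hf1 hf0 hfc hf01 using fun n => exists_continuous_one_zero_of_isCompact (hK n)
    hU.isClosed_compl (disjoint_compl_right_iff_subset.mpr (hKU n))
  refine ⟨f, hfc, fun n y => (hf01 n y).1, fun μ => le_antisymm ?_ (iSup_le fun n => ?_)⟩
  · rw [← hKunion, hKmono.measure_iUnion]
    refine iSup_mono fun n => ?_
    rw [← lintegral_indicator_one (hK n).measurableSet]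
    refine lintegral_mono fun y => ?_
    by_cases hy : y ∈ K n
    · simp [hy, hf1 n hy]
    · simp [hy]
  · rw [← lintegral_indicator_one hU.measurableSet]
    refine lintegral_mono fun y => ?_
    by_cases hy : y ∈ U
    · simpa [hy] using (hf01 n y).2
    · simp [hy, hf0 n hy]

theorem measurable_measure_of_measurable_integral {ι Y : Type*} [MeasurableSpace ι]
    [TopologicalSpace Y] [MeasurableSpace Y] [BorelSpace Y] [T2Space Y] [LocallyCompactSpace Y]
    [SecondCountableTopology Y] {κ : ι → Measure Y} [∀ i, IsFiniteMeasureOnCompacts (κ i)]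
    (hκ : ∀ f : C(Y, ℝ), HasCompactSupport f → Measurable fun i => ∫ y, f y ∂κ i) :
    Measurable κ := by
  have hopen : ∀ U ∈ {U : Set Y | IsOpen U}, Measurable fun i => κ i U := by
    intro U hU
    obtain ⟨f, hfc, hf0, hfU⟩ := IsOpen.exists_seq_iSup_lintegral_eq hU
    have hint : ∀ n i,
        ∫⁻ y, ENNReal.ofReal (f n y) ∂κ i = ENNReal.ofReal (∫ y, f n y ∂κ i) :=
      fun n i => (ofReal_integral_eq_lintegral_ofReal
        ((f n).continuous.integrable_of_hasCompactSupport (hfc n)) (.of_forall (hf0 n))).symm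
    simp_rw [hfU, hint]
    exact .iSup fun n => ENNReal.measurable_ofReal.comp (hκ _ (hfc n))
  let K := CompactExhaustion.choice Y
  exact .measure_of_isPiSystem_of_exhaustion BorelSpace.measurable_eq
    (fun s hs t ht _ => hs.inter ht) (fun n => isOpen_interior) K.monotone_interior
    K.iUnion_interior (fun i n => ((measure_mono interior_subset).trans_lt
      (K.isCompact n).measure_lt_top).ne) hopen

theorem MeasureTheory.Measure.ae_bind_of_forall_ae {α β : Type*} [MeasurableSpace α]
    [MeasurableSpace β] {μ : Measure α} {κ : α → Measure β} (hκ : AEMeasurable κ μ)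
    {s : Set β} (hs : MeasurableSet s) (h : ∀ a, ∀ᵐ b ∂κ a, b ∈ s) :
    ∀ᵐ b ∂μ.bind κ, b ∈ s := by
  rw [ae_iff, ← compl_def, Measure.bind_apply hs.compl hκ]
  simp_rw [show ∀ a, κ a sᶜ = 0 from fun a => ae_iff.1 (h a), lintegral_zero]

section HaarSystem

variable {Arr Obj : Type} [TopologicalSpace Arr] [TopologicalSpace Obj] [MeasurableSpace Arr]
  {D : GroupoidData Arr Obj} {R : Set Arr} {κ : Obj → Measure Arr}

theorem IsHaarSystemOn.isFiniteMeasureOnCompacts_s7 (h : IsHaarSystemOn D R κ) (u : Obj) :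
    IsFiniteMeasureOnCompacts (κ u) :=
  ⟨fun K hK => h.2.2.1 u K hK⟩

theorem IsHaarSystemOn.measurable [BorelSpace Arr] [T2Space Arr] [LocallyCompactSpace Arr]
    [SecondCountableTopology Arr] [MeasurableSpace Obj] [OpensMeasurableSpace Obj]
    (h : IsHaarSystemOn D R κ) : Measurable κ :=
  have := h.isFiniteMeasureOnCompacts_s7
  measurable_measure_of_measurable_integral fun f hf => (h.2.2.2.2 f f.continuous hf).measurable

theorem IsHaarSystemOn.ae_r_eq (h : IsHaarSystemOn D univ κ) (u : Obj) :
    ∀ᵐ a ∂κ u, D.r a = u :=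
  ae_iff.2 (by simpa [compl_def] using h.1 u)

theorem IsHaarSystemOn.measure_univ_ne_zero (h : IsHaarSystemOn D univ κ)
    (hD : ∀ u, D.r (D.unit u) = u) (u : Obj) : κ u univ ≠ 0 :=
  (h.2.1 u univ isOpen_univ ⟨D.unit u, trivial, hD u, trivial⟩).ne'

end HaarSystem

section IteratedTransformationGroupoid

variable {ArrG ObjG ArrH ObjH X : Type}
  {G : GroupoidData ArrG ObjG} {H : GroupoidData ArrH ObjH} {rX : X → ObjG} {sX : X → ObjH}
  {lact : ArrG → X → X} {ract : X → ArrH → X}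

theorem EData_inv_preimage_univ_prod_univ_prod (A : Set ArrH) :
    (EData G H rX sX lact ract).inv ⁻¹' (univ ×ˢ univ ×ˢ A) =
      univ ×ˢ univ ×ˢ (H.inv ⁻¹' A) :=
  rfl

section Topology

variable [TopologicalSpace ArrG] [TopologicalSpace ObjG] [TopologicalSpace ArrH]
  [TopologicalSpace ObjH] [TopologicalSpace X]

theorem IsTopEquivalence.isClosed_ECond [T2Space ObjG] [T2Space ObjH]
    (heq : IsTopEquivalence G H rX sX lact ract) : IsClosed (ECond G H rX sX) :=
  (isClosed_eq (heq.G_top.continuous_r.comp continuous_fst)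
    (heq.continuous_rX.comp (continuous_fst.comp continuous_snd))).inter
  (isClosed_eq (heq.continuous_sX.comp (continuous_fst.comp continuous_snd))
    (heq.H_top.continuous_r.comp (continuous_snd.comp continuous_snd)))

theorem IsTopEquivalence.continuousOn_lact (heq : IsTopEquivalence G H rX sX lact ract) :
    ContinuousOn (fun q : ArrG × X => lact q.1 q.2) {q | G.s q.1 = rX q.2} :=
  continuousOn_iff_continuous_domRestrict.2 heq.continuous_lact

theorem IsTopEquivalence.continuousOn_ract (heq : IsTopEquivalence G H rX sX lact ract) :
    ContinuousOn (fun q : X × ArrH => ract q.1 q.2) {q | sX q.1 = H.r q.2} :=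
  continuousOn_iff_continuous_domRestrict.2 heq.continuous_ract

theorem IsTopEquivalence.continuousOn_EData_inv (heq : IsTopEquivalence G H rX sX lact ract) :
    ContinuousOn (EData G H rX sX lact ract).inv (ECond G H rX sX) := by
  have hGinv : Continuous fun a : ArrG × X × ArrH => G.inv a.1 :=
    heq.G_top.continuous_inv.comp continuous_fst
  have hlact : ContinuousOn (fun a : ArrG × X × ArrH => lact (G.inv a.1) a.2.1)
      (ECond G H rX sX) :=
    heq.continuousOn_lact.comp (hGinv.prodMk (continuous_fst.comp continuous_snd)).continuousOn
      fun a ha => (heq.G_groupoid.s_inv a.1).trans ha.1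
  have hs : ContinuousOn (EData G H rX sX lact ract).s (ECond G H rX sX) :=
    heq.continuousOn_ract.comp (hlact.prodMk (continuous_snd.comp continuous_snd).continuousOn)
      fun a ha => (heq.equivalence.sX_lact _ _ ((heq.G_groupoid.s_inv a.1).trans ha.1)).trans ha.2
  exact hGinv.continuousOn.prodMk
    (hs.prodMk (heq.H_top.continuous_inv.comp (continuous_snd.comp continuous_snd)).continuousOn)

theorem IsTopEquivalence.aemeasurable_EData_inv [T2Space ObjG] [T2Space ObjH]
    [MeasurableSpace ArrG] [MeasurableSpace ArrH] [MeasurableSpace X]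
    [BorelSpace (ArrG × X × ArrH)] (heq : IsTopEquivalence G H rX sX lact ract)
    {ν : Measure (ArrG × X × ArrH)} (hν : ∀ᵐ a ∂ν, a ∈ ECond G H rX sX) :
    AEMeasurable (EData G H rX sX lact ract).inv ν := by
  rw [← Measure.restrict_eq_self_of_ae_mem hν]
  exact heq.continuousOn_EData_inv.aemeasurable heq.isClosed_ECond.measurableSet

end Topology

variable [MeasurableSpace ArrG] [MeasurableSpace ArrH] [MeasurableSpace X]
  {lamG : ObjG → Measure ArrG} {sigH : ObjH → Measure ArrH}

theorem measurable_EHaar [TopologicalSpace ArrG] [TopologicalSpace ArrH] [TopologicalSpace X]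
    [OpensMeasurableSpace ArrG] [LocallyCompactSpace ArrG] [SecondCountableTopology ArrG]
    [OpensMeasurableSpace ArrH] [LocallyCompactSpace ArrH] [SecondCountableTopology ArrH]
    [OpensMeasurableSpace X] [LocallyCompactSpace X] [SecondCountableTopology X]
    [∀ u, IsFiniteMeasureOnCompacts (lamG u)] [∀ v, IsFiniteMeasureOnCompacts (sigH v)]
    (hlamG : Measurable fun x => lamG (rX x)) (hsigH : Measurable fun x => sigH (sX x)) :
    Measurable (EHaar lamG sigH rX sX) :=
  hlamG.prod_measure (Measure.measurable_dirac.prod_measure hsigH)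

theorem EHaar_apply_univ_prod_univ_prod [∀ v, SFinite (sigH v)] (x : X) (A : Set ArrH) :
    EHaar lamG sigH rX sX x (univ ×ˢ univ ×ˢ A) = lamG (rX x) univ * sigH (sX x) A := by
  simp [EHaar, Measure.prod_prod]

theorem ae_mem_ECond_EHaar [MeasurableSingletonClass X]
    (hlamG : ∀ u, ∀ᵐ γ ∂lamG u, G.r γ = u) (hsigH : ∀ v, ∀ᵐ η ∂sigH v, H.r η = v) (x : X) :
    ∀ᵐ a ∂EHaar lamG sigH rX sX x, a ∈ ECond G H rX sX := by
  have hfst : ∀ᵐ a ∂EHaar lamG sigH rX sX x, G.r a.1 = rX x :=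
    Measure.quasiMeasurePreserving_fst.ae (hlamG (rX x))
  have hmid : ∀ᵐ a ∂EHaar lamG sigH rX sX x, a.2.1 = x :=
    (Measure.quasiMeasurePreserving_fst.comp Measure.quasiMeasurePreserving_snd).ae
      ((ae_dirac_iff measurableSet_eq).2 rfl)
  have hsnd : ∀ᵐ a ∂EHaar lamG sigH rX sX x, H.r a.2.2 = sX x :=
    (Measure.quasiMeasurePreserving_snd.comp Measure.quasiMeasurePreserving_snd).ae
      (hsigH (sX x))
  filter_upwards [hfst, hmid, hsnd] with a h1 h2 h3
  exact ⟨h2 ▸ h1, h2 ▸ h3.symm⟩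

theorem nuMeasure_EHaar_univ_prod_univ_prod_eq_zero_iff [MeasurableSpace ObjH]
    [∀ v, SFinite (sigH v)] {μ : Measure X} (hE : Measurable (EHaar lamG sigH rX sX))
    (hsigH : Measurable sigH) (hsX : Measurable sX) (hpos : ∀ x, lamG (rX x) univ ≠ 0)
    {A : Set ArrH} (hA : MeasurableSet A) :
    nuMeasure (EHaar lamG sigH rX sX) μ (univ ×ˢ univ ×ˢ A) = 0 ↔
      nuMeasure sigH (μ.map sX) A = 0 := by
  have hcyl : MeasurableSet (univ ×ˢ univ ×ˢ A : Set (ArrG × X × ArrH)) :=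
    MeasurableSet.univ.prod (MeasurableSet.univ.prod hA)
  have hσA : Measurable fun v => sigH v A := (Measure.measurable_coe hA).comp hsigH
  rw [nuMeasure, nuMeasure, Measure.bind_apply hcyl hE.aemeasurable,
    Measure.bind_apply hA hsigH.aemeasurable, lintegral_map hσA hsX,
    lintegral_eq_zero_iff (Measure.measurable_measure.1 hE _ hcyl),
    lintegral_eq_zero_iff (f := fun x => sigH (sX x) A) (hσA.comp hsX)]
  refine eventually_congr (.of_forall fun x => ?_)
  simp [EHaar_apply_univ_prod_univ_prod, hpos x]

end IteratedTransformationGroupoid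

theorem statement7_general
    {ArrG ObjG ArrH ObjH X : Type}
    [TopologicalSpace ArrG] [TopologicalSpace ObjG] [TopologicalSpace ArrH]
    [TopologicalSpace ObjH] [TopologicalSpace X]
    [T2Space ArrG] [T2Space ObjG] [T2Space ArrH] [T2Space ObjH] [T2Space X]
    [SecondCountableTopology ArrG]
    [SecondCountableTopology ArrH]
    [SecondCountableTopology X]
    [LocallyCompactSpace ArrG] [LocallyCompactSpace ArrH]
    [LocallyCompactSpace X]
    [MeasurableSpace ArrG] [BorelSpace ArrG] [MeasurableSpace ArrH] [BorelSpace ArrH]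
    [MeasurableSpace X] [BorelSpace X] [MeasurableSpace ObjH] [BorelSpace ObjH]
    (G : GroupoidData ArrG ObjG) (H : GroupoidData ArrH ObjH)
    (rX : X → ObjG) (sX : X → ObjH) (lact : ArrG → X → X) (ract : X → ArrH → X)
    (heq : IsTopEquivalence G H rX sX lact ract)
    (lamG : ObjG → MeasureTheory.Measure ArrG)
    (hlamG : IsHaarSystemOn G Set.univ lamG)
    (sigH : ObjH → MeasureTheory.Measure ArrH)
    (hsigH : IsHaarSystemOn H Set.univ sigH)
    (μ : MeasureTheory.Measure X)
    (hqi : IsQuasiInvariant (EHaar lamG sigH rX sX)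
      (EData G H rX sX lact ract).inv μ)
    : IsQuasiInvariant sigH H.inv (μ.map sX) := by
  borelize ObjG
  have := hlamG.isFiniteMeasureOnCompacts_s7
  have := hsigH.isFiniteMeasureOnCompacts_s7
  have hsX : Measurable sX := heq.continuous_sX.measurable
  have hHinv : Measurable H.inv := heq.H_top.continuous_inv.measurable
  have hE : Measurable (EHaar lamG sigH rX sX) := measurable_EHaar
    (hlamG.measurable.comp heq.continuous_rX.measurable) (hsigH.measurable.comp hsX)
  set νE := nuMeasure (EHaar lamG sigH rX sX) μ
  have hEinv : AEMeasurable (EData G H rX sX lact ract).inv νE :=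
    heq.aemeasurable_EData_inv <| Measure.ae_bind_of_forall_ae hE.aemeasurable
      heq.isClosed_ECond.measurableSet (ae_mem_ECond_EHaar hlamG.ae_r_eq hsigH.ae_r_eq)
  have hnull {A : Set ArrH} (hA : MeasurableSet A) :
      νE (univ ×ˢ univ ×ˢ A) = 0 ↔ nuMeasure sigH (μ.map sX) A = 0 :=
    nuMeasure_EHaar_univ_prod_univ_prod_eq_zero_iff hE hsigH.measurable hsX
      (fun x => hlamG.measure_univ_ne_zero heq.G_groupoid.r_unit (rX x)) hA
  have hmap {A : Set ArrH} (hA : MeasurableSet A) :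
      νE.map (EData G H rX sX lact ract).inv (univ ×ˢ univ ×ˢ A) =
        νE (univ ×ˢ univ ×ˢ (H.inv ⁻¹' A)) := by
    rw [Measure.map_apply_of_aemeasurable hEinv (MeasurableSet.univ.prod
      (MeasurableSet.univ.prod hA)), EData_inv_preimage_univ_prod_univ_prod]
  constructor
  · refine .mk fun A hA h0 => ?_
    rw [Measure.map_apply hHinv hA, ← hnull (hHinv hA), ← hmap hA] at h0
    exact (hnull hA).1 (hqi.1 h0)
  · refine .mk fun A hA h0 => ?_
    rw [Measure.map_apply hHinv hA, ← hnull (hHinv hA), ← hmap hA]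
    exact hqi.2 ((hnull hA).2 h0)

/-- If `μ` is a Radon measure on `X` which is quasi-invariant
with respect to `E = G ⋉ X ⋊ H`, then the push-forward `τ = (s_X)_*μ` is
quasi-invariant with respect to `H`. -/
theorem statement7
    {ArrG ObjG ArrH ObjH X : Type}
    [TopologicalSpace ArrG] [TopologicalSpace ObjG] [TopologicalSpace ArrH]
    [TopologicalSpace ObjH] [TopologicalSpace X]
    [T2Space ArrG] [T2Space ObjG] [T2Space ArrH] [T2Space ObjH] [T2Space X]
    [SecondCountableTopology ArrG] [SecondCountableTopology ObjG]
    [SecondCountableTopology ArrH] [SecondCountableTopology ObjH]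
    [SecondCountableTopology X]
    [LocallyCompactSpace ArrG] [LocallyCompactSpace ObjG] [LocallyCompactSpace ArrH]
    [LocallyCompactSpace ObjH] [LocallyCompactSpace X]
    [MeasurableSpace ArrG] [BorelSpace ArrG] [MeasurableSpace ArrH] [BorelSpace ArrH]
    [MeasurableSpace X] [BorelSpace X] [MeasurableSpace ObjH] [BorelSpace ObjH]
    (G : GroupoidData ArrG ObjG) (H : GroupoidData ArrH ObjH)
    (rX : X → ObjG) (sX : X → ObjH) (lact : ArrG → X → X) (ract : X → ArrH → X)
    (heq : IsTopEquivalence G H rX sX lact ract)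
    (lamG : ObjG → MeasureTheory.Measure ArrG)
    (hlamG : IsHaarSystemOn G Set.univ lamG)
    (sigH : ObjH → MeasureTheory.Measure ArrH)
    (hsigH : IsHaarSystemOn H Set.univ sigH)
    (μ : MeasureTheory.Measure X) [μ.Regular]
    (hqi : IsQuasiInvariant (EHaar lamG sigH rX sX)
      (EData G H rX sX lact ract).inv μ)
    : IsQuasiInvariant sigH H.inv (μ.map sX) :=
  statement7_general G H rX sX lact ract heq lamG hlamG sigH hsigH μ hqi
end

section
/- Let X*ℋ be a Borel Hilbert bundle over an analytic Borel space X, let H̄ = X⋊H be a transformation groupoid acting freely on X with Hausdorff orbit space, and let U be a Borel homomorphism of the groupoid E into Iso(X*ℋ). Then there exists a Borel section e of X*ℋ such that e(x) is a unit vector whenever ℋ(x) ≠ 0, and e(x·η) = U*_{(r(x),x,η)} e(x) for all (x,η) ∈ H̄. -/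
open MeasureTheory Filter Topology

open scoped InnerProductSpace

/-!
The orbit space `X/H` is identified with the unit space of `G` through `r_X`, a continuous open
surjection between Polish spaces; refining balls around a dense sequence gives it a Borel
cross-section `c`. Freeness makes the arrow `ς(x)` with `c(q x) · ς(x) = x` unique, and the
Lusin–Souslin theorem for the injection `(x, η) ↦ (x, x · η)` makes `ς` Borel. Pulling the first
basis vector of `ℋ(c(q x))` back along the arrow `(r(x), c(q x), ς(x))` of `E` gives `e`; since
`ς(x · η) = ς(x) η`, that arrow composed with `(r(x), x, η)` is the arrow chosen at `x · η`, and
the required equivariance is the multiplicativity of `U`.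
-/

open Set Metric

theorem Topology.IsDenseEmbedding.isOpen_range_of_locallyCompactSpace {α β : Type*}
    [TopologicalSpace α] [TopologicalSpace β] [LocallyCompactSpace α] [T2Space β] {f : α → β}
    (hf : IsDenseEmbedding f) : IsOpen (range f) := by
  refine isOpen_iff_mem_nhds.2 ?_
  rintro _ ⟨x, rfl⟩
  obtain ⟨K, hK, hKx⟩ := exists_compact_mem_nhds x
  rw [hf.isInducing.nhds_eq_comap] at hKx
  obtain ⟨t, ht, htK⟩ := hKx
  have hK_image : interior t ∩ range f ⊆ f '' K := by
    rintro _ ⟨hz, w, rfl⟩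
    exact ⟨w, htK (interior_subset (s := t) hz), rfl⟩
  refine mem_of_superset (interior_mem_nhds.2 ht) ?_
  calc interior t ⊆ closure (interior t ∩ range f) :=
        hf.dense.open_subset_closure_inter isOpen_interior
    _ ⊆ f '' K := (closure_mono hK_image).trans
        (hK.image hf.continuous).isClosed.closure_subset
    _ ⊆ range f := image_subset_range f K

theorem polishSpace_of_locallyCompactSpace (α : Type*) [TopologicalSpace α] [T2Space α]
    [LocallyCompactSpace α] [SecondCountableTopology α] : PolishSpace α := by
  let := TopologicalSpace.metrizableSpaceMetric α
  have hι := UniformSpace.Completion.isDenseEmbedding_coe (α := α)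
  have := hι.isOpen_range_of_locallyCompactSpace.polishSpace
  exact (hι.isEmbedding.toHomeomorph).isClosedEmbedding.polishSpace

section MeasurableSection

variable {X Y : Type*} [TopologicalSpace Y] [MeasurableSpace Y] [OpensMeasurableSpace Y]
  {f : X → Y}

theorem exists_measurable_ball_index [PseudoMetricSpace X] (hf : IsOpenMap f) {u : ℕ → X}
    (hu : DenseRange u) {N : Y → ℕ} (hN : Measurable N) {V : ℕ → Set X}
    (hV : ∀ i, IsOpen (V i)) (hNV : ∀ y, y ∈ f '' V (N y)) {ε : ℝ} (hε : 0 < ε) :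
    ∃ N' : Y → ℕ, Measurable N' ∧ ∀ y, y ∈ f '' (ball (u (N' y)) ε ∩ V (N y)) := by
  classical
  have hex : ∀ y, ∃ i, y ∈ f '' (ball (u i) ε ∩ V (N y)) := by
    intro y
    obtain ⟨x, hxV, rfl⟩ := hNV y
    obtain ⟨i, hi⟩ := hu.exists_dist_lt x hε
    exact ⟨i, x, ⟨mem_ball.2 hi, hxV⟩, rfl⟩
  refine ⟨fun y => Nat.find (hex y), measurable_find hex fun i => ?_,
    fun y => Nat.find_spec (hex y)⟩
  have hset : {y | y ∈ f '' (ball (u i) ε ∩ V (N y))} =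
      ⋃ j, N ⁻¹' {j} ∩ f '' (ball (u i) ε ∩ V j) := by
    ext y
    simp
  rw [hset]
  exact .iUnion fun j => (hN (measurableSet_singleton j)).inter
    (hf _ (isOpen_ball.inter (hV j))).measurableSet


theorem exists_measurable_ball_chain [PseudoMetricSpace X] (hf : IsOpenMap f)
    (hsurj : Function.Surjective f) {u : ℕ → X} (hu : DenseRange u) {r : ℕ → ℝ}
    (hr : ∀ k, 0 < r k) :
    ∃ N : ℕ → Y → ℕ, (∀ k, Measurable (N k)) ∧
      ∀ k y, y ∈ f '' (ball (u (N (k + 1) y)) (r (k + 1)) ∩ ball (u (N k y)) (r k)) := by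
  obtain ⟨N₀, hN₀, hN₀y⟩ : ∃ N : Y → ℕ, Measurable N ∧ ∀ y, y ∈ f '' ball (u (N y)) (r 0) := by
    obtain ⟨N, hN, hNy⟩ := exists_measurable_ball_index hf hu (N := 0) measurable_const
      (fun _ => isOpen_univ) (fun y => by simpa using hsurj y) (hr 0)
    exact ⟨N, hN, fun y => by simpa using hNy y⟩
  have hstep : ∀ k (N : Y → ℕ), Measurable N → (∀ y, y ∈ f '' ball (u (N y)) (r k)) →
      ∃ N' : Y → ℕ, Measurable N' ∧
        ∀ y, y ∈ f '' (ball (u (N' y)) (r (k + 1)) ∩ ball (u (N y)) (r k)) :=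
    fun k _ hN hNy => exists_measurable_ball_index hf hu hN (fun _ => isOpen_ball) hNy (hr _)
  choose! next hnext_meas hnext using hstep
  let N : ℕ → Y → ℕ := fun k => Nat.rec N₀ next k
  have hN : ∀ k, Measurable (N k) ∧ ∀ y, y ∈ f '' ball (u (N k y)) (r k) := by
    intro k
    induction k with
    | zero => exact ⟨hN₀, hN₀y⟩
    | succ k ih =>
      exact ⟨hnext_meas k _ ih.1 ih.2,
        fun y => image_mono inter_subset_left (hnext k _ ih.1 ih.2 y)⟩
  exact ⟨N, fun k => (hN k).1, fun k => hnext k _ (hN k).1 (hN k).2⟩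

theorem exists_measurable_rightInverse_of_isOpenMap [TopologicalSpace X] [PolishSpace X]
    [MeasurableSpace X] [BorelSpace X] [T2Space Y] (hf : Continuous f) (hopen : IsOpenMap f)
    (hsurj : Function.Surjective f) : ∃ c : Y → X, Measurable c ∧ ∀ y, f (c y) = y := by
  rcases isEmpty_or_nonempty X with hX | hX
  · have : IsEmpty Y := ⟨fun y => hX.elim (hsurj y).choose⟩
    exact ⟨isEmptyElim, measurable_of_empty _, isEmptyElim⟩
  let := TopologicalSpace.upgradeIsCompletelyMetrizable X
  obtain ⟨u, hu⟩ := TopologicalSpace.exists_dense_seq X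
  -- The centres of a chain of balls of radii `2⁻ᵏ`, consecutive ones meeting over `y`,
  -- converge to a preimage of `y`.
  obtain ⟨N, hN, hchain⟩ :=
    exists_measurable_ball_chain (r := fun k => (1 / 2) ^ k) hopen hsurj hu (fun k => by positivity)
  have hdist : ∀ y k, dist (u (N k y)) (u (N (k + 1) y)) ≤ 2 * (1 / 2) ^ k := by
    intro y k
    obtain ⟨x, ⟨hx₁, hx₂⟩, -⟩ := hchain k y
    have hr_succ : (1 / 2 : ℝ) ^ (k + 1) ≤ (1 / 2) ^ k :=
      pow_le_pow_of_le_one (by norm_num) (by norm_num) k.le_succ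
    calc dist (u (N k y)) (u (N (k + 1) y)) ≤ dist (u (N k y)) x + dist x (u (N (k + 1) y)) :=
          dist_triangle _ _ _
      _ ≤ 2 * (1 / 2) ^ k := by linarith [mem_ball'.1 hx₂, mem_ball.1 hx₁]
  choose c hc using fun y =>
    cauchySeq_tendsto_of_complete (cauchySeq_of_le_geometric _ _ (by norm_num) (hdist y))
  refine ⟨c, measurable_of_tendsto_metrizable' atTop
    (fun k => measurable_from_nat.comp (hN k)) (tendsto_pi_nhds.2 hc), fun y => ?_⟩
  choose x hx hfx using fun k => hchain k y
  have hx_lim : Tendsto x atTop (𝓝 (c y)) := by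
    refine (hc y).congr_dist (squeeze_zero (fun _ => dist_nonneg)
      (fun k => (mem_ball'.1 (hx k).2).le) ?_)
    exact tendsto_pow_atTop_nhds_zero_of_lt_one (by norm_num) (by norm_num)
  exact tendsto_nhds_unique ((hf.tendsto _).comp hx_lim) (by simp [Function.comp_def, hfx])

end MeasurableSection

section GroupoidAlgebra

variable {Arr Obj X : Type} {D : GroupoidData Arr Obj}

theorem GroupoidData.IsGroupoid.inv_unit (hD : D.IsGroupoid) (u : Obj) :
    D.inv (D.unit u) = D.unit u := by
  have h₁ := hD.inv_comp (D.unit u)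
  have h₂ := hD.comp_unit (D.inv (D.unit u))
  rw [hD.s_unit] at h₁
  rw [hD.s_inv, hD.r_unit] at h₂
  rw [← h₂, h₁]

theorem GroupoidData.IsGroupoid.unit_comp_unit (hD : D.IsGroupoid) (u : Obj) :
    D.comp (D.unit u) (D.unit u) = D.unit u := by
  simpa only [hD.r_unit] using hD.unit_comp (D.unit u)

theorem IsRightActionOf.eq_of_ract_eq {sX : X → Obj} {ract : X → Arr → X}
    (hD : D.IsGroupoid) (hact : IsRightActionOf D sX ract)
    (hfree : ∀ x η, sX x = D.r η → ract x η = x → η = D.unit (sX x))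
    {x : X} {η₁ η₂ : Arr} (h₁ : sX x = D.r η₁) (h₂ : sX x = D.r η₂)
    (h : ract x η₁ = ract x η₂) : η₁ = η₂ := by
  have hs : D.s η₁ = D.s η₂ := by
    rw [← hact.moment x η₁ h₁, ← hact.moment x η₂ h₂, h]
  have hcomposable : D.s η₁ = D.r (D.inv η₂) := by rw [hD.r_inv, hs]
  have hθ : sX x = D.r (D.comp η₁ (D.inv η₂)) := by rw [hD.r_comp _ _ hcomposable, h₁]
  have hθ_fix : ract x (D.comp η₁ (D.inv η₂)) = x := by
    rw [hact.comp_act x η₁ (D.inv η₂) h₁ hcomposable, h,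
      ← hact.comp_act x η₂ (D.inv η₂) h₂ (hD.r_inv η₂).symm, hD.comp_inv, ← h₂, hact.unit_act]
  have hθ_unit := hfree x _ hθ hθ_fix
  have hassoc := hD.comp_assoc η₁ (D.inv η₂) η₂ hcomposable (hD.s_inv η₂)
  rw [hD.inv_comp, ← hs, hD.comp_unit, hθ_unit, h₂, hD.unit_comp] at hassoc
  exact hassoc.symm

end GroupoidAlgebra

section Transversal

variable {ArrG ObjG ArrH ObjH X : Type} [MeasurableSpace X] [MeasurableSpace ArrH]

/-- `y x = c (q x)` is the chosen point of the `H`-orbit of `x` and `ς x` the unique arrow with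
`y x · ς x = x`; the orbit space `X/H` is identified with `ObjG` through `rX`. -/
structure IsBorelTransversal (H : GroupoidData ArrH ObjH) (rX : X → ObjG) (sX : X → ObjH)
    (ract : X → ArrH → X) (y : X → X) (ς : X → ArrH) : Prop where
  measurable_rep : Measurable y
  measurable_arrow : Measurable ς
  rX_rep : ∀ x, rX (y x) = rX x
  sX_rep : ∀ x, sX (y x) = H.r (ς x)
  ract_rep_arrow : ∀ x, ract (y x) (ς x) = x
  rep_ract : ∀ x η, sX x = H.r η → y (ract x η) = y x
  arrow_ract : ∀ x η, sX x = H.r η → ς (ract x η) = H.comp (ς x) η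

theorem exists_isBorelTransversal [TopologicalSpace ArrG] [TopologicalSpace ObjG]
    [TopologicalSpace ArrH] [TopologicalSpace ObjH] [TopologicalSpace X] [T2Space ObjG]
    [T2Space ObjH] [PolishSpace X] [PolishSpace ArrH] [BorelSpace X] [BorelSpace ArrH]
    {G : GroupoidData ArrG ObjG} {H : GroupoidData ArrH ObjH} {rX : X → ObjG} {sX : X → ObjH}
    {lact : ArrG → X → X} {ract : X → ArrH → X} (heq : IsTopEquivalence G H rX sX lact ract) :
    ∃ y ς, IsBorelTransversal H rX sX ract y ς := by
  let : MeasurableSpace ObjG := borel ObjG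
  have : BorelSpace ObjG := ⟨rfl⟩
  have hequiv := heq.equivalence
  obtain ⟨c, hc, hrc⟩ :=
    exists_measurable_rightInverse_of_isOpenMap heq.continuous_rX heq.open_rX hequiv.rX_surj
  choose ς hς_mom hς using fun x => (hequiv.rX_fibres (c (rX x)) x).1 (hrc (rX x))
  have huniq : ∀ {x η₁ η₂}, sX x = H.r η₁ → sX x = H.r η₂ → ract x η₁ = ract x η₂ → η₁ = η₂ :=
    hequiv.right_action.eq_of_ract_eq heq.H_groupoid hequiv.free_right
  have hrep_ract : ∀ x η, sX x = H.r η → c (rX (ract x η)) = c (rX x) :=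
    fun x η hη => by rw [hequiv.rX_ract x η hη]
  refine ⟨c ∘ rX, ς, hc.comp heq.continuous_rX.measurable, ?_, fun x => hrc (rX x), hς_mom, hς,
    hrep_ract, fun x η hη => ?_⟩
  · -- Lusin–Souslin: `(x, η) ↦ (x, x · η)` is a continuous injection of a Polish space.
    let P := {q : X × ArrH // sX q.1 = H.r q.2}
    have : PolishSpace P := (isClosed_eq (heq.continuous_sX.comp continuous_fst)
      (heq.H_top.continuous_r.comp continuous_snd)).polishSpace
    let ψ : P → X × X := fun p => (p.1.1, ract p.1.1 p.1.2)
    have hψ : MeasurableEmbedding ψ := by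
      refine Continuous.measurableEmbedding
        ((continuous_fst.comp continuous_subtype_val).prodMk heq.continuous_ract) ?_
      rintro ⟨⟨x₁, η₁⟩, h₁⟩ ⟨⟨x₂, η₂⟩, h₂⟩ h
      obtain rfl : x₁ = x₂ := congrArg Prod.fst h
      obtain rfl := huniq h₁ h₂ (congrArg Prod.snd h)
      rfl
    have hlift : Measurable fun x => (⟨(c (rX x), ς x), hς_mom x⟩ : P) := by
      rw [← hψ.measurable_comp_iff]
      simpa [ψ, Function.comp_def, hς] using
        (hc.comp heq.continuous_rX.measurable).prodMk measurable_id
    exact measurable_snd.comp (measurable_subtype_coe.comp hlift)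
  · have hcomposable : H.s (ς x) = H.r η := by
      rw [← hequiv.right_action.moment _ _ (hς_mom x), hς x, hη]
    refine huniq (hς_mom _) ?_ ?_
    · rw [hrep_ract x η hη, heq.H_groupoid.r_comp _ _ hcomposable, hς_mom x]
    · rw [hς, hrep_ract x η hη, hequiv.right_action.comp_act _ _ _ (hς_mom x) hcomposable,
        hς x]

end Transversal

section Fibres

variable {X : Type} {ℋ : X → Type}

theorem apply_eq_cast (g : ∀ x, ℋ x) {x z : X} (h : x = z) :
    g z = cast (congrArg ℋ h) (g x) := by
  subst h; rfl

theorem norm_cast_fibre [∀ x, NormedAddCommGroup (ℋ x)] {x z : X} (h : x = z) (v : ℋ x) :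
    ‖cast (congrArg ℋ h) v‖ = ‖v‖ := by
  subst h; rfl

theorem inner_cast_fibre [∀ x, NormedAddCommGroup (ℋ x)] [∀ x, InnerProductSpace ℂ (ℋ x)]
    {x z : X} (h : x = z) (v w : ℋ x) :
    ⟪cast (congrArg ℋ h) v, cast (congrArg ℋ h) w⟫_ℂ = ⟪v, w⟫_ℂ := by
  subst h; rfl

end Fibres

section PullbackSection

variable {Arr X : Type} {D : GroupoidData Arr X} {ℋ : X → Type}
  [∀ x, NormedAddCommGroup (ℋ x)] [∀ x, InnerProductSpace ℂ (ℋ x)]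
  (U : ∀ a, ℋ (D.s a) ≃ₗᵢ[ℂ] ℋ (D.r a))

def pullbackSection (f : ∀ x, ℋ x) (a : X → Arr) (ha : ∀ x, D.s (a x) = x) (x : X) : ℋ x :=
  cast (congrArg ℋ (ha x)) ((U (a x)).symm (f (D.r (a x))))

theorem pullbackSection_congr (f : ∀ x, ℋ x) {a a' : Arr} (h : a = a') {z : X}
    (hz : D.s a = z) (hz' : D.s a' = z) :
    cast (congrArg ℋ hz) ((U a).symm (f (D.r a))) =
      cast (congrArg ℋ hz') ((U a').symm (f (D.r a'))) := by
  subst h; rfl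

theorem inner_pullbackSection (f g : ∀ x, ℋ x) (a : X → Arr) (ha : ∀ x, D.s (a x) = x)
    (x : X) :
    ⟪pullbackSection U f a ha x, g x⟫_ℂ =
      starRingEnd ℂ ⟪U (a x) (g (D.s (a x))), f (D.r (a x))⟫_ℂ := by
  rw [pullbackSection, apply_eq_cast g (ha x), inner_cast_fibre (ha x), inner_conj_symm,
    ← (U (a x)).inner_map_map, LinearIsometryEquiv.apply_symm_apply]

theorem norm_pullbackSection_eq_one {f : ∀ x, ℋ x}
    (hf : ∀ x, (∃ v : ℋ x, v ≠ 0) → ‖f x‖ = 1) (a : X → Arr) (ha : ∀ x, D.s (a x) = x) {x : X}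
    (hx : ∃ v : ℋ x, v ≠ 0) : ‖pullbackSection U f a ha x‖ = 1 := by
  rw [pullbackSection, norm_cast_fibre (ha x), LinearIsometryEquiv.norm_map]
  obtain ⟨v, hv⟩ := hx
  refine hf _ ⟨U (a x) (cast (congrArg ℋ (ha x).symm) v), ?_⟩
  rw [← norm_ne_zero_iff, LinearIsometryEquiv.norm_map, norm_cast_fibre (ha x).symm]
  exact norm_ne_zero_iff.2 hv

end PullbackSection

section IterativeGroupoid

variable {ArrG ObjG ArrH ObjH X : Type} {G : GroupoidData ArrG ObjG} {H : GroupoidData ArrH ObjH}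
  {rX : X → ObjG} {sX : X → ObjH} {lact : ArrG → X → X} {ract : X → ArrH → X}

theorem EData_s_unit_left (hG : G.IsGroupoid) (hL : IsLeftActionOf G rX lact) (x : X)
    (η : ArrH) : (EData G H rX sX lact ract).s (G.unit (rX x), x, η) = ract x η := by
  simp only [EData, hG.inv_unit, hL.unit_act]

variable (G rX) in
def transversalArrow (y : X → X) (ς : X → ArrH) (x : X) : ArrG × X × ArrH :=
  (G.unit (rX (y x)), y x, ς x)

variable [MeasurableSpace X] [MeasurableSpace ArrH] {y : X → X} {ς : X → ArrH}

theorem IsBorelTransversal.EData_s_transversalArrow (hT : IsBorelTransversal H rX sX ract y ς)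
    (hG : G.IsGroupoid) (hL : IsLeftActionOf G rX lact) (x : X) :
    (EData G H rX sX lact ract).s (transversalArrow G rX y ς x) = x :=
  (EData_s_unit_left hG hL _ _).trans (hT.ract_rep_arrow x)

theorem IsBorelTransversal.transversalArrow_mem_ECond
    (hT : IsBorelTransversal H rX sX ract y ς) (hG : G.IsGroupoid) (x : X) :
    transversalArrow G rX y ς x ∈ ECond G H rX sX :=
  ⟨hG.r_unit _, hT.sX_rep x⟩

theorem IsBorelTransversal.EData_comp_transversalArrow
    (hT : IsBorelTransversal H rX sX ract y ς) (hG : G.IsGroupoid) {x : X} {η : ArrH}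
    (hη : sX x = H.r η) :
    (EData G H rX sX lact ract).comp (transversalArrow G rX y ς x) (G.unit (rX x), x, η) =
      transversalArrow G rX y ς (ract x η) := by
  simp only [EData, transversalArrow, hT.rep_ract x η hη, hT.arrow_ract x η hη, hT.rX_rep,
    hG.unit_comp_unit]

theorem IsBorelTransversal.measurable_transversalArrow [TopologicalSpace ArrG]
    [TopologicalSpace ObjG] [TopologicalSpace X] [MeasurableSpace ArrG] [BorelSpace ArrG]
    [OpensMeasurableSpace X] (hT : IsBorelTransversal H rX sX ract y ς) (hunit : Continuous G.unit)
    (hrX : Continuous rX) : Measurable (transversalArrow G rX y ς) :=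
  ((hunit.comp hrX).measurable.comp hT.measurable_rep).prodMk
    (hT.measurable_rep.prodMk hT.measurable_arrow)

end IterativeGroupoid

section BundleHom

variable {ArrG ObjG ArrH ObjH X : Type} {G : GroupoidData ArrG ObjG} {H : GroupoidData ArrH ObjH}
  {rX : X → ObjG} {sX : X → ObjH} {lact : ArrG → X → X} {ract : X → ArrH → X} {ℋ : X → Type}
  [∀ x, NormedAddCommGroup (ℋ x)] [∀ x, InnerProductSpace ℂ (ℋ x)]

def IsBundleHom
    (U : ∀ a, ℋ ((EData G H rX sX lact ract).s a) ≃ₗᵢ[ℂ] ℋ ((EData G H rX sX lact ract).r a)) :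
    Prop :=
  ∀ a b, a ∈ ECond G H rX sX → b ∈ ECond G H rX sX →
    ∀ (h : (EData G H rX sX lact ract).s a = (EData G H rX sX lact ract).r b)
      (hs : (EData G H rX sX lact ract).s ((EData G H rX sX lact ract).comp a b) =
        (EData G H rX sX lact ract).s b)
      (v : ℋ ((EData G H rX sX lact ract).s b)),
      U ((EData G H rX sX lact ract).comp a b) (cast (congrArg ℋ hs.symm) v) =
        U a (cast (congrArg ℋ h.symm) (U b v))

variable
  {U : ∀ a, ℋ ((EData G H rX sX lact ract).s a) ≃ₗᵢ[ℂ] ℋ ((EData G H rX sX lact ract).r a)}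

theorem IsBundleHom.symm_apply_comp (hU : IsBundleHom U) {p b : ArrG × X × ArrH}
    (hp : p ∈ ECond G H rX sX) (hb : b ∈ ECond G H rX sX)
    (h : (EData G H rX sX lact ract).s p = (EData G H rX sX lact ract).r b)
    (hs : (EData G H rX sX lact ract).s ((EData G H rX sX lact ract).comp p b) =
      (EData G H rX sX lact ract).s b)
    (w : ℋ ((EData G H rX sX lact ract).r p)) :
    (U b).symm (cast (congrArg ℋ h) ((U p).symm w)) =
      cast (congrArg ℋ hs) ((U ((EData G H rX sX lact ract).comp p b)).symm w) := by
  rw [LinearIsometryEquiv.symm_apply_eq]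
  have hw := hU p b hp hb h hs
    (cast (congrArg ℋ hs) ((U ((EData G H rX sX lact ract).comp p b)).symm w))
  rw [cast_cast, cast_eq] at hw
  erw [LinearIsometryEquiv.apply_symm_apply] at hw
  conv_lhs => rw [hw]
  rw [LinearIsometryEquiv.symm_apply_apply, cast_cast, cast_eq]

theorem IsBundleHom.pullbackSection_comp (hU : IsBundleHom U) (f : ∀ x, ℋ x)
    {a : X → ArrG × X × ArrH} (ha : ∀ x, (EData G H rX sX lact ract).s (a x) = x)
    (haE : ∀ x, a x ∈ ECond G H rX sX) {γ : ArrG} {x : X} {η : ArrH}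
    (hb : (γ, x, η) ∈ ECond G H rX sX)
    (hcomp : (EData G H rX sX lact ract).comp (a x) (γ, x, η) =
      a ((EData G H rX sX lact ract).s (γ, x, η))) :
    pullbackSection U f a ha ((EData G H rX sX lact ract).s (γ, x, η)) =
      (U (γ, x, η)).symm (pullbackSection U f a ha x) := by
  have hs : (EData G H rX sX lact ract).s ((EData G H rX sX lact ract).comp (a x) (γ, x, η)) =
      (EData G H rX sX lact ract).s (γ, x, η) :=
    (congrArg (EData G H rX sX lact ract).s hcomp).trans (ha _)
  calc pullbackSection U f a ha ((EData G H rX sX lact ract).s (γ, x, η))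
      = cast (congrArg ℋ hs)
          ((U ((EData G H rX sX lact ract).comp (a x) (γ, x, η))).symm (f (a x).2.1)) :=
        pullbackSection_congr U f hcomp.symm (ha _) hs
    _ = _ := (hU.symm_apply_comp (haE x) hb (ha x) hs _).symm

end BundleHom

theorem statement10_general
    {ArrG ObjG ArrH ObjH X : Type}
    [TopologicalSpace ArrG] [TopologicalSpace ObjG] [TopologicalSpace ArrH]
    [TopologicalSpace ObjH] [TopologicalSpace X]
    [T2Space ObjG] [T2Space ArrH] [T2Space ObjH] [T2Space X]
    [SecondCountableTopology ArrH]
    [SecondCountableTopology X]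
    [LocallyCompactSpace ArrH]
    [LocallyCompactSpace X]
    [MeasurableSpace ArrG] [BorelSpace ArrG] [MeasurableSpace ArrH] [BorelSpace ArrH]
    [MeasurableSpace X] [BorelSpace X]
    (G : GroupoidData ArrG ObjG) (H : GroupoidData ArrH ObjH)
    (rX : X → ObjG) (sX : X → ObjH) (lact : ArrG → X → X) (ract : X → ArrH → X)
    (heq : IsTopEquivalence G H rX sX lact ract)
    -- a Borel Hilbert bundle `X*ℋ` with special orthogonal fundamental sequence:
    (ℋ : X → Type) [∀ x, NormedAddCommGroup (ℋ x)] [∀ x, InnerProductSpace ℂ (ℋ x)]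
    (es : ℕ → ∀ x, ℋ x)
    (hes_unit : ∀ (x : X) i, es i x ≠ 0 → ‖es i x‖ = 1)
    (hes_first : ∀ x : X, (∃ v : ℋ x, v ≠ 0) → es 0 x ≠ 0)
    -- a Borel homomorphism `U : E → Iso(X*ℋ)`:
    (U : ∀ a : ArrG × X × ArrH,
      ℋ ((EData G H rX sX lact ract).s a) ≃ₗᵢ[ℂ] ℋ ((EData G H rX sX lact ract).r a))
    (hU_borel : ∀ i j, Measurable fun a : ArrG × X × ArrH =>
      ⟪U a (es i ((EData G H rX sX lact ract).s a)),
        es j ((EData G H rX sX lact ract).r a)⟫_ℂ)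
    (hU_hom : ∀ a b, a ∈ ECond G H rX sX → b ∈ ECond G H rX sX →
      ∀ (h : (EData G H rX sX lact ract).s a = (EData G H rX sX lact ract).r b)
        (hs : (EData G H rX sX lact ract).s ((EData G H rX sX lact ract).comp a b) =
          (EData G H rX sX lact ract).s b)
        (v : ℋ ((EData G H rX sX lact ract).s b)),
        U ((EData G H rX sX lact ract).comp a b) (cast (congrArg ℋ hs.symm) v) =
          U a (cast (congrArg ℋ h.symm) (U b v)))
    : ∃ e : ∀ x, ℋ x,
        (∀ i, Measurable fun x => ⟪e x, es i x⟫_ℂ) ∧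
        (∀ x : X, (∃ v : ℋ x, v ≠ 0) → ‖e x‖ = 1) ∧
        (∀ x η, sX x = H.r η →
          ∀ hs : (EData G H rX sX lact ract).s (G.unit (rX x), x, η) = ract x η,
          e (ract x η) = cast (congrArg ℋ hs) ((U (G.unit (rX x), x, η)).symm (e x))) := by
  have := polishSpace_of_locallyCompactSpace X
  have := polishSpace_of_locallyCompactSpace ArrH
  have hG := heq.G_groupoid
  have hL := heq.equivalence.left_action
  obtain ⟨y, ς, hT⟩ := exists_isBorelTransversal heq
  have ha := hT.EData_s_transversalArrow hG hL
  refine ⟨pullbackSection U (es 0) _ ha, fun i => ?_,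
    fun x => norm_pullbackSection_eq_one U (fun x hx => hes_unit x 0 (hes_first x hx)) _ ha,
    fun x η hη hs => ?_⟩
  · simp_rw [inner_pullbackSection]
    exact Complex.continuous_conj.measurable.comp ((hU_borel i 0).comp
      (hT.measurable_transversalArrow heq.G_top.continuous_unit heq.continuous_rX))
  · have hcomp := hT.EData_comp_transversalArrow (lact := lact) hG hη
    rw [← EData_s_unit_left (H := H) (sX := sX) (ract := ract) hG hL x η] at hcomp
    rw [← IsBundleHom.pullbackSection_comp hU_hom (es 0) ha (hT.transversalArrow_mem_ECond hG)
      ⟨hG.r_unit _, hη⟩ hcomp]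
    exact apply_eq_cast _ hs

/-- Given a Borel Hilbert bundle `X*ℋ` (presented by a
special orthogonal fundamental sequence `es`), a `(G,H)`-equivalence `X` and
a Borel homomorphism `U` of `E = G⋉X⋊H` into `Iso(X*ℋ)`, there is a Borel
section `e` of `X*ℋ` with `e(x)` a unit vector whenever `ℋ(x) ≠ 0` and
`e(x·η) = U*_{(r(x),x,η)} e(x)` for all `(x,η) ∈ H̄ = X⋊H`. -/
theorem statement10
    {ArrG ObjG ArrH ObjH X : Type}
    [TopologicalSpace ArrG] [TopologicalSpace ObjG] [TopologicalSpace ArrH]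
    [TopologicalSpace ObjH] [TopologicalSpace X]
    [T2Space ArrG] [T2Space ObjG] [T2Space ArrH] [T2Space ObjH] [T2Space X]
    [SecondCountableTopology ArrG] [SecondCountableTopology ObjG]
    [SecondCountableTopology ArrH] [SecondCountableTopology ObjH]
    [SecondCountableTopology X]
    [LocallyCompactSpace ArrG] [LocallyCompactSpace ObjG] [LocallyCompactSpace ArrH]
    [LocallyCompactSpace ObjH] [LocallyCompactSpace X]
    [MeasurableSpace ArrG] [BorelSpace ArrG] [MeasurableSpace ArrH] [BorelSpace ArrH]
    [MeasurableSpace X] [BorelSpace X] [MeasurableSpace ObjH] [BorelSpace ObjH]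
    (G : GroupoidData ArrG ObjG) (H : GroupoidData ArrH ObjH)
    (rX : X → ObjG) (sX : X → ObjH) (lact : ArrG → X → X) (ract : X → ArrH → X)
    (heq : IsTopEquivalence G H rX sX lact ract)
    (lamG : ObjG → MeasureTheory.Measure ArrG)
    (hlamG : IsHaarSystemOn G Set.univ lamG)
    (sigH : ObjH → MeasureTheory.Measure ArrH)
    (hsigH : IsHaarSystemOn H Set.univ sigH)
    -- a Borel Hilbert bundle `X*ℋ` with special orthogonal fundamental sequence:
    (ℋ : X → Type) [∀ x, NormedAddCommGroup (ℋ x)] [∀ x, InnerProductSpace ℂ (ℋ x)]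
    [∀ x, CompleteSpace (ℋ x)]
    (es : ℕ → ∀ x, ℋ x)
    (hes_on : ∀ (x : X) i j, es i x ≠ 0 → es j x ≠ 0 →
      ⟪es i x, es j x⟫_ℂ = if i = j then 1 else 0)
    (hes_unit : ∀ (x : X) i, es i x ≠ 0 → ‖es i x‖ = 1)
    (hes_total : ∀ x : X,
      (Submodule.span ℂ (Set.range fun i => es i x)).topologicalClosure = ⊤)
    (hes_first : ∀ x : X, (∃ v : ℋ x, v ≠ 0) → es 0 x ≠ 0)
    -- a Borel homomorphism `U : E → Iso(X*ℋ)`: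
    (U : ∀ a : ArrG × X × ArrH,
      ℋ ((EData G H rX sX lact ract).s a) ≃ₗᵢ[ℂ] ℋ ((EData G H rX sX lact ract).r a))
    (hU_borel : ∀ i j, Measurable fun a : ArrG × X × ArrH =>
      ⟪U a (es i ((EData G H rX sX lact ract).s a)),
        es j ((EData G H rX sX lact ract).r a)⟫_ℂ)
    (hU_hom : ∀ a b, a ∈ ECond G H rX sX → b ∈ ECond G H rX sX →
      ∀ (h : (EData G H rX sX lact ract).s a = (EData G H rX sX lact ract).r b)
        (hs : (EData G H rX sX lact ract).s ((EData G H rX sX lact ract).comp a b) =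
          (EData G H rX sX lact ract).s b)
        (v : ℋ ((EData G H rX sX lact ract).s b)),
        U ((EData G H rX sX lact ract).comp a b) (cast (congrArg ℋ hs.symm) v) =
          U a (cast (congrArg ℋ h.symm) (U b v)))
    : ∃ e : ∀ x, ℋ x,
        (∀ i, Measurable fun x => ⟪e x, es i x⟫_ℂ) ∧
        (∀ x : X, (∃ v : ℋ x, v ≠ 0) → ‖e x‖ = 1) ∧
        (∀ x η, sX x = H.r η →
          ∀ hs : (EData G H rX sX lact ract).s (G.unit (rX x), x, η) = ract x η,
          e (ract x η) = cast (congrArg ℋ hs) ((U (G.unit (rX x), x, η)).symm (e x))) :=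
  statement10_general G H rX sX lact ract heq ℋ es hes_unit hes_first U hU_borel hU_hom
end
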